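/- arXiv:2110.02421 — 5 statements merged into one kernel-verified Lean document; each statement's English description precedes it below -/
import Mathlib

section
/- Let π¹,…,πᴺ be policies and ρ¹,…,ρᴺ initial distributions on a finite state space, with occupancy measures ρ^{πᵉ}_{ρᵉ} generated by (ρᵉ, πᵉ, T). Define the averaged initial distribution ρ̄ = N⁻¹ Σₑ ρᵉ, the averaged occupancy measure ρ̄ᵒ = N⁻¹ Σₑ ρ^{πᵉ}_{ρᵉ}, and the mixed policy πᴰ(a|s) = (Σₑ πᵉ(a|s) ρ^{πᵉ}_{ρᵉ}(s)) / (Σₑ ρ^{πᵉ}_{ρᵉ}(s)) where the denominator is positive. Then the occupancy measure generated by (ρ̄, πᴰ, T) equals ρ̄ᵒ, and moreover N⁻¹ Σₑ ρ^{πᵉ}_{ρᵉ}(s) πᵉ(a|s) = ρ̄ᵒ(s) πᴰ(a|s) for all s with ρ̄ᵒ(s) > 0. -/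
open Finset

/-- Bellman flow equation for the occupancy measure of a trajectory distribution. -/
lemma occ_bellman {S A : Type*} [Fintype S] [Fintype A]
    (γ : ℝ) (hγ0 : 0 ≤ γ) (hγ1 : γ < 1)
    (T : S → A → S → ℝ) (π : S → A → ℝ)
    (p : ℕ → S → ℝ) (hp : ∀ i s, 0 ≤ p i s) (hp1 : ∀ i s, p i s ≤ 1)
    (hrec : ∀ i s, p (i+1) s = ∑ s', ∑ a', T s' a' s * π s' a' * p i s') (s : S) :
    (1-γ) * ∑' i : ℕ, γ^i * p i s
      = (1-γ) * p 0 s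
        + γ * ∑ s', ∑ a', T s' a' s * π s' a' * ((1-γ) * ∑' i : ℕ, γ^i * p i s') := by
  have hsumm : ∀ s, Summable (fun i : ℕ => γ^i * p i s) := by
    intro s
    refine Summable.of_nonneg_of_le
      (fun i => mul_nonneg (pow_nonneg hγ0 _) (hp i s))
      (fun i => ?_) (summable_geometric_of_lt_one hγ0 hγ1)
    exact mul_le_of_le_one_right (pow_nonneg hγ0 _) (hp1 i s)
  have key : ∑' i : ℕ, γ^i * p i s
      = p 0 s + γ * ∑ s', ∑ a', T s' a' s * π s' a' * ∑' i : ℕ, γ^i * p i s' := by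
    rw [Summable.tsum_eq_zero_add (hsumm s)]
    simp only [pow_zero, one_mul]
    congr 1
    have hterm : ∀ i : ℕ, γ^(i+1) * p (i+1) s
        = ∑ q : S × A, (γ * (T q.1 q.2 s * π q.1 q.2)) * (γ^i * p i q.1) := by
      intro i
      rw [hrec, Fintype.sum_prod_type, Finset.mul_sum]
      refine Finset.sum_congr rfl fun s' _ => ?_
      rw [Finset.mul_sum]
      exact Finset.sum_congr rfl fun a' _ => by ring
    calc ∑' i : ℕ, γ^(i+1) * p (i+1) s
        = ∑' i : ℕ, ∑ q : S × A, (γ * (T q.1 q.2 s * π q.1 q.2)) * (γ^i * p i q.1) :=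
          tsum_congr hterm
      _ = ∑ q : S × A, ∑' i : ℕ, (γ * (T q.1 q.2 s * π q.1 q.2)) * (γ^i * p i q.1) :=
          Summable.tsum_finsetSum (fun q _ => (hsumm q.1).mul_left _)
      _ = ∑ q : S × A, (γ * (T q.1 q.2 s * π q.1 q.2)) * ∑' i : ℕ, γ^i * p i q.1 :=
          Finset.sum_congr rfl fun q _ => tsum_mul_left
      _ = γ * ∑ s', ∑ a', T s' a' s * π s' a' * ∑' i : ℕ, γ^i * p i s' := by
          rw [Fintype.sum_prod_type, Finset.mul_sum]
          refine Finset.sum_congr rfl fun s' _ => ?_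
          rw [Finset.mul_sum]
          exact Finset.sum_congr rfl fun a' _ => by ring
  rw [key, mul_add]
  congr 1
  simp only [Finset.mul_sum]
  refine Finset.sum_congr rfl fun s' _ => Finset.sum_congr rfl fun a' _ => by ring

/-- The Bellman flow operator with discount `γ < 1` has at most one fixed point (here
stated for the difference of two fixed points). -/
lemma occ_contraction {S A : Type*} [Fintype S] [Fintype A]
    (γ : ℝ) (hγ0 : 0 ≤ γ) (hγ1 : γ < 1)
    (T : S → A → S → ℝ) (hT : ∀ s a s', 0 ≤ T s a s') (hT1 : ∀ s a, ∑ s', T s a s' = 1)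
    (π : S → A → ℝ) (hπ : ∀ s a, 0 ≤ π s a) (hπ1 : ∀ s, ∑ a, π s a ≤ 1)
    (d : S → ℝ) (hd : ∀ s, d s = γ * ∑ s', ∑ a', T s' a' s * π s' a' * d s') :
    ∀ s, d s = 0 := by
  set M := ∑ s, |d s| with hM
  have hMle : M ≤ γ * M := by
    calc M = ∑ s, |γ * ∑ s', ∑ a', T s' a' s * π s' a' * d s'| :=
        Finset.sum_congr rfl fun s _ => by rw [hd]
      _ ≤ ∑ s, γ * ∑ s', ∑ a', T s' a' s * π s' a' * |d s'| := by
          refine Finset.sum_le_sum fun s _ => ?_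
          rw [abs_mul, abs_of_nonneg hγ0]
          refine mul_le_mul_of_nonneg_left ?_ hγ0
          calc |∑ s', ∑ a', T s' a' s * π s' a' * d s'|
              ≤ ∑ s', |∑ a', T s' a' s * π s' a' * d s'| := Finset.abs_sum_le_sum_abs _ _
            _ ≤ ∑ s', ∑ a', |T s' a' s * π s' a' * d s'| :=
                Finset.sum_le_sum fun s' _ => Finset.abs_sum_le_sum_abs _ _
            _ = ∑ s', ∑ a', T s' a' s * π s' a' * |d s'| := by
                refine Finset.sum_congr rfl fun s' _ => Finset.sum_congr rfl fun a' _ => ?_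
                rw [abs_mul, abs_of_nonneg (mul_nonneg (hT _ _ _) (hπ _ _))]
      _ = γ * ∑ s', ∑ a', (∑ s, T s' a' s) * (π s' a' * |d s'|) := by
          rw [← Finset.mul_sum]
          congr 1
          rw [Finset.sum_comm]
          refine Finset.sum_congr rfl fun s' _ => ?_
          rw [Finset.sum_comm]
          refine Finset.sum_congr rfl fun a' _ => ?_
          rw [Finset.sum_mul]
          exact Finset.sum_congr rfl fun s _ => by ring
      _ = γ * ∑ s', (∑ a', π s' a') * |d s'| := by
          congr 1
          refine Finset.sum_congr rfl fun s' _ => ?_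
          rw [Finset.sum_mul]
          refine Finset.sum_congr rfl fun a' _ => ?_
          rw [hT1, one_mul]
      _ ≤ γ * ∑ s', 1 * |d s'| := by
          refine mul_le_mul_of_nonneg_left (Finset.sum_le_sum fun s' _ => ?_) hγ0
          exact mul_le_mul_of_nonneg_right (hπ1 s') (abs_nonneg _)
      _ = γ * M := by simp [hM]
  have hMnn : 0 ≤ M := Finset.sum_nonneg fun s _ => abs_nonneg _
  have hM0 : M ≤ 0 := by nlinarith
  intro s
  have h1 : |d s| ≤ M := Finset.single_le_sum (fun s _ => abs_nonneg (d s)) (mem_univ s)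
  exact abs_eq_zero.mp (le_antisymm (h1.trans hM0) (abs_nonneg _))

/-- The mixed (behavior) policy generates the averaged occupancy measure. -/
theorem averaged_occupancy {S A : Type*} [Fintype S] [Fintype A]
    (γ : ℝ) (hγ0 : 0 < γ) (hγ1 : γ < 1)
    (T : S → A → S → ℝ) (hT : ∀ s a s', 0 ≤ T s a s') (hT1 : ∀ s a, ∑ s', T s a s' = 1)
    (N : ℕ) (hN : 0 < N)
    (π : Fin N → S → A → ℝ) (hπ : ∀ e s a, 0 ≤ π e s a) (hπ1 : ∀ e s, ∑ a, π e s a = 1)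
    (ρ : Fin N → ℕ → S → ℝ) (hρpos : ∀ e i s, 0 ≤ ρ e i s) (hρ1 : ∀ e i, ∑ s, ρ e i s = 1)
    (hrec : ∀ e i s, ρ e (i+1) s = ∑ s', ∑ a', T s' a' s * π e s' a' * ρ e i s')
    (occ : Fin N → S → ℝ) (hocc : ∀ e s, occ e s = (1-γ) * ∑' i : ℕ, γ^i * ρ e i s)
    (πD : S → A → ℝ) (hπD : ∀ s a, πD s a = (∑ e, π e s a * occ e s) / (∑ e, occ e s))
    (μ : ℕ → S → ℝ) (hμ0 : ∀ s, μ 0 s = (N:ℝ)⁻¹ * ∑ e, ρ e 0 s)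
    (hμrec : ∀ i s, μ (i+1) s = ∑ s', ∑ a', T s' a' s * πD s' a' * μ i s') :
    (∀ s, (1-γ) * ∑' i : ℕ, γ^i * μ i s = (N:ℝ)⁻¹ * ∑ e, occ e s) ∧
    (∀ s a, 0 < (N:ℝ)⁻¹ * ∑ e, occ e s →
      (N:ℝ)⁻¹ * ∑ e, occ e s * π e s a = ((N:ℝ)⁻¹ * ∑ e, occ e s) * πD s a) := by
  have hoccnn : ∀ e s, 0 ≤ occ e s := by
    intro e s
    rw [hocc]
    exact mul_nonneg (by linarith) (tsum_nonneg fun i =>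
      mul_nonneg (pow_nonneg hγ0.le _) (hρpos e i s))
  -- key identity: ∑ e, occ e s * π e s a = (∑ e, occ e s) * πD s a
  have key : ∀ s a, ∑ e, occ e s * π e s a = (∑ e, occ e s) * πD s a := by
    intro s a
    rw [hπD]
    rcases eq_or_lt_of_le (Finset.sum_nonneg fun e _ => hoccnn e s) with h | h
    · have he : ∀ e ∈ (univ : Finset (Fin N)), occ e s = 0 :=
        (Finset.sum_eq_zero_iff_of_nonneg fun e _ => hoccnn e s).mp h.symm
      rw [← h, zero_mul]
      exact Finset.sum_eq_zero fun e _ => by rw [he e (mem_univ e), zero_mul]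
    · rw [mul_comm, div_mul_cancel₀ _ h.ne']
      exact Finset.sum_congr rfl fun e _ => mul_comm _ _
    -- properties of πD
  have hπDnn : ∀ s a, 0 ≤ πD s a := by
    intro s a
    rw [hπD]
    exact div_nonneg (Finset.sum_nonneg fun e _ => mul_nonneg (hπ e s a) (hoccnn e s))
      (Finset.sum_nonneg fun e _ => hoccnn e s)
  have hπD1 : ∀ s, ∑ a, πD s a ≤ 1 := by
    intro s
    simp only [hπD]
    rw [← Finset.sum_div]
    rcases eq_or_lt_of_le (Finset.sum_nonneg fun e _ => hoccnn e s) with h | h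
    · rw [← h, div_zero]; norm_num
    · have hnum : ∑ a, ∑ e, π e s a * occ e s = ∑ e, occ e s := by
        rw [Finset.sum_comm]
        refine Finset.sum_congr rfl fun e _ => ?_
        rw [← Finset.sum_mul, hπ1, one_mul]
      rw [hnum, div_self h.ne']
  -- μ is nonneg with total mass ≤ 1
  have hμprop : ∀ i, (∀ s, 0 ≤ μ i s) ∧ (∑ s, μ i s ≤ 1) := by
    intro i
    induction i with
    | zero =>
      constructor
      · intro s
        rw [hμ0]
        exact mul_nonneg (inv_nonneg.mpr (Nat.cast_nonneg N))
          (Finset.sum_nonneg fun e _ => hρpos e 0 s)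
      · have : ∑ s, μ 0 s = (N:ℝ)⁻¹ * ∑ s, ∑ e, ρ e 0 s := by
          rw [Finset.mul_sum]
          exact Finset.sum_congr rfl fun s _ => hμ0 s
        rw [this, Finset.sum_comm]
        have h1 : ∑ e : Fin N, ∑ s, ρ e 0 s = (N : ℝ) := by
          rw [Finset.sum_congr rfl fun e _ => hρ1 e 0]
          simp
        rw [h1, inv_mul_cancel₀ (Nat.cast_ne_zero.mpr hN.ne')]
    | succ i ih =>
      constructor
      · intro s
        rw [hμrec]
        exact Finset.sum_nonneg fun s' _ => Finset.sum_nonneg fun a' _ =>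
          mul_nonneg (mul_nonneg (hT _ _ _) (hπDnn _ _)) (ih.1 s')
      · have h2 : ∑ s, μ (i+1) s = ∑ s', (∑ a', πD s' a') * μ i s' := by
          calc ∑ s, μ (i+1) s
              = ∑ s, ∑ s', ∑ a', T s' a' s * πD s' a' * μ i s' :=
                Finset.sum_congr rfl fun s _ => hμrec i s
            _ = ∑ s', ∑ a', (∑ s, T s' a' s) * (πD s' a' * μ i s') := by
                rw [Finset.sum_comm]
                refine Finset.sum_congr rfl fun s' _ => ?_
                rw [Finset.sum_comm]
                refine Finset.sum_congr rfl fun a' _ => ?_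
                rw [Finset.sum_mul]
                exact Finset.sum_congr rfl fun s _ => by ring
            _ = ∑ s', (∑ a', πD s' a') * μ i s' := by
                refine Finset.sum_congr rfl fun s' _ => ?_
                rw [Finset.sum_mul]
                refine Finset.sum_congr rfl fun a' _ => ?_
                rw [hT1, one_mul]
        rw [h2]
        calc ∑ s', (∑ a', πD s' a') * μ i s' ≤ ∑ s', 1 * μ i s' :=
              Finset.sum_le_sum fun s' _ =>
                mul_le_mul_of_nonneg_right (hπD1 s') (ih.1 s')
          _ = ∑ s', μ i s' := by simp
          _ ≤ 1 := ih.2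
  -- Bellman equation for the μ-occupancy
  have hμbell : ∀ s, (1-γ) * ∑' i : ℕ, γ^i * μ i s
      = (1-γ) * μ 0 s
        + γ * ∑ s', ∑ a', T s' a' s * πD s' a' * ((1-γ) * ∑' i : ℕ, γ^i * μ i s') := by
    intro s
    refine occ_bellman γ hγ0.le hγ1 T πD μ (fun i s => (hμprop i).1 s) (fun i s => ?_) hμrec s
    exact le_trans (Finset.single_le_sum (fun s _ => (hμprop i).1 s) (mem_univ s)) (hμprop i).2
  -- Bellman equation for each occ e
  have hoccbell : ∀ e s, occ e s
      = (1-γ) * ρ e 0 s + γ * ∑ s', ∑ a', T s' a' s * π e s' a' * occ e s' := by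
    intro e s
    have hb := occ_bellman γ hγ0.le hγ1 T (π e) (ρ e) (hρpos e)
      (fun i s => by
        have := Finset.single_le_sum (fun s _ => hρpos e i s) (mem_univ s)
        rw [hρ1 e i] at this; exact this)
      (hrec e) s
    rw [hocc e s, hb]
    congr 2
    refine Finset.sum_congr rfl fun s' _ => Finset.sum_congr rfl fun a' _ => ?_
    rw [← hocc e s']
  -- Bellman equation for the averaged occupancy y s = N⁻¹ * ∑ e, occ e s
  have hybell : ∀ s, (N:ℝ)⁻¹ * ∑ e, occ e s
      = (1-γ) * μ 0 s
        + γ * ∑ s', ∑ a', T s' a' s * πD s' a' * ((N:ℝ)⁻¹ * ∑ e, occ e s') := by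
    intro s
    have h1 : (N:ℝ)⁻¹ * ∑ e, occ e s
        = (N:ℝ)⁻¹ * ∑ e, ((1-γ) * ρ e 0 s
            + γ * ∑ s', ∑ a', T s' a' s * π e s' a' * occ e s') := by
      congr 1
      exact Finset.sum_congr rfl fun e _ => hoccbell e s
    rw [h1, Finset.sum_add_distrib, mul_add]
    congr 1
    · rw [hμ0, ← Finset.mul_sum]
      ring
    · have h2 : ∑ e, γ * ∑ s', ∑ a', T s' a' s * π e s' a' * occ e s'
          = γ * ∑ s', ∑ a', T s' a' s * ((∑ e, occ e s') * πD s' a') := by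
        rw [← Finset.mul_sum]
        congr 1
        rw [Finset.sum_comm]
        refine Finset.sum_congr rfl fun s' _ => ?_
        rw [Finset.sum_comm]
        refine Finset.sum_congr rfl fun a' _ => ?_
        rw [← key s' a', Finset.mul_sum]
        exact Finset.sum_congr rfl fun e _ => by ring
      rw [h2, mul_left_comm]
      congr 1
      rw [Finset.mul_sum]
      refine Finset.sum_congr rfl fun s' _ => ?_
      rw [Finset.mul_sum]
      exact Finset.sum_congr rfl fun a' _ => by ring
  -- the difference satisfies the homogeneous equation, hence vanishes
  have hzero : ∀ s, ((1-γ) * ∑' i : ℕ, γ^i * μ i s) - (N:ℝ)⁻¹ * ∑ e, occ e s = 0 := by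
    refine occ_contraction γ hγ0.le hγ1 T hT hT1 πD hπDnn hπD1 _ fun s => ?_
    rw [hμbell s, hybell s]
    have hAB : (∑ s', ∑ a', T s' a' s * πD s' a' * ((1-γ) * ∑' i : ℕ, γ^i * μ i s'))
        - ∑ s', ∑ a', T s' a' s * πD s' a' * ((N:ℝ)⁻¹ * ∑ e, occ e s')
        = ∑ s', ∑ a', T s' a' s * πD s' a'
            * (((1-γ) * ∑' i : ℕ, γ^i * μ i s') - (N:ℝ)⁻¹ * ∑ e, occ e s') := by
      rw [← Finset.sum_sub_distrib]
      refine Finset.sum_congr rfl fun s' _ => ?_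
      rw [← Finset.sum_sub_distrib]
      exact Finset.sum_congr rfl fun a' _ => by ring
    rw [← hAB]
    ring
  constructor
  · intro s
    have := hzero s
    linarith
  · intro s a _
    rw [mul_assoc, ← key s a]
end

section
/- Let Q^π and Q^{π'} be the Q-functions of two policies π, π' on a finite MDP with discount γ ∈ (0,1), and suppose Q^π(s,·) is L-Lipschitz in a for every s (with A a finite metric space). Let ρ̂ be any distribution on states, and let ρ^{π'}_{ρ̂} be the normalized occupancy measure generated by (ρ̂, π', T). Then E_{s∼ρ̂, a∼π'(·|s)} |Q^{π'}(s,a) − Q^π(s,a)| ≤ (L/(1−γ)) E_{s ∼ ρ^{π'}_{ρ̂}} W₁(π'(·|s), π(·|s)). -/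
/-!
Write `δ s = E_{a ∼ π' s} |Q^{π'} s a - Q^π s a|`. Subtracting the Bellman equations and
splitting `V^{π'} - V^π` at `s'` into `E_{π' s'} (Q^{π'} - Q^π)` plus
`E_{π' s'} Q^π - E_{π s'} Q^π`, the last term bounded by `L W₁ s'` through the dual
(Kantorovich–Rubinstein) form of `W₁`, gives
`|Q^{π'} s a - Q^π s a| ≤ γ E_{s' ∼ T s a} (δ + L W₁) s'`.
Averaging over `ρ i` and `π'` turns this into `e i ≤ γ (e (i+1) + L w (i+1))` for
`e i = E_{ρ i} δ` and `w i = E_{ρ i} W₁`. Unrolling, the remainder `γⁿ e n` vanishes because `e`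
is bounded, so `e 0 ≤ L ∑ γⁱ w i`, which is the claim.
-/

open Finset

section Kantorovich

variable {A : Type*} [Fintype A]

lemma sum_mul_sub_sum_mul_eq {p q : A → ℝ} (hpq : ∑ a, p a = ∑ a, q a) (f : A → ℝ) (a₀ : A) :
    ∑ a, f a * p a - ∑ a, f a * q a = ∑ a, (f a - f a₀) * (p a - q a) := by
  have h : ∑ a, f a₀ * p a = ∑ a, f a₀ * q a := by rw [← mul_sum, ← mul_sum, hpq]
  simp only [sub_mul, mul_sub, sum_sub_distrib, h]
  ring

variable [MetricSpace A]

def kantorovichSet (p q : A → ℝ) : Set ℝ :=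
  {x | ∃ f : A → ℝ, (∀ a a', |f a - f a'| ≤ dist a a') ∧
    x = |(∑ a, f a * p a) - ∑ a, f a * q a|}

lemma bddAbove_kantorovichSet [Nonempty A] {p q : A → ℝ} (hpq : ∑ a, p a = ∑ a, q a) :
    BddAbove (kantorovichSet p q) := by
  obtain ⟨a₀⟩ := ‹Nonempty A›
  refine ⟨∑ a, dist a a₀ * |p a - q a|, ?_⟩
  rintro x ⟨f, hf, rfl⟩
  rw [sum_mul_sub_sum_mul_eq hpq f a₀]
  refine (abs_sum_le_sum_abs _ _).trans (sum_le_sum fun a _ => ?_)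
  rw [abs_mul]
  exact mul_le_mul_of_nonneg_right (hf a a₀) (abs_nonneg _)

lemma abs_sum_mul_sub_sum_mul_le [Nonempty A] {p q : A → ℝ} (hpq : ∑ a, p a = ∑ a, q a)
    {f : A → ℝ} {L : ℝ} (hL : 0 ≤ L) (hf : ∀ a a', |f a - f a'| ≤ L * dist a a') :
    |∑ a, p a * f a - ∑ a, q a * f a| ≤ L * sSup (kantorovichSet p q) := by
  simp only [mul_comm (p _), mul_comm (q _)]
  rcases hL.eq_or_lt with rfl | hL
  · obtain ⟨a₀⟩ := ‹Nonempty A›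
    have hconst : ∀ a, f a - f a₀ = 0 := fun a => abs_nonpos_iff.mp (by simpa using hf a a₀)
    simp [sum_mul_sub_sum_mul_eq hpq f a₀, hconst]
  · have hmem : |∑ a, f a / L * p a - ∑ a, f a / L * q a| ∈ kantorovichSet p q := by
      refine ⟨fun a => f a / L, fun a a' => ?_, rfl⟩
      rw [← sub_div, abs_div, abs_of_pos hL, div_le_iff₀ hL, mul_comm]
      exact hf a a'
    have hle := le_csSup (bddAbove_kantorovichSet hpq) hmem
    simp only [div_mul_eq_mul_div, ← sum_div, ← sub_div, abs_div, abs_of_pos hL,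
      div_le_iff₀ hL] at hle
    linarith

lemma sSup_kantorovichSet_nonneg [Nonempty A] {p q : A → ℝ} (hpq : ∑ a, p a = ∑ a, q a) :
    0 ≤ sSup (kantorovichSet p q) :=
  le_csSup_of_le (bddAbove_kantorovichSet hpq) ⟨0, fun a a' => by simp, by simp⟩ le_rfl

end Kantorovich

section StateChain

variable {S A : Type*} [Fintype S] [Fintype A] {T : S → A → S → ℝ} {π' : S → A → ℝ}
  {ρ : ℕ → S → ℝ}

lemma sum_chain_succ_mul (hρrec : ∀ i s, ρ (i+1) s = ∑ s', ∑ a', T s' a' s * π' s' a' * ρ i s')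
    (i : ℕ) (g : S → ℝ) :
    ∑ s', ρ (i+1) s' * g s' = ∑ s, ρ i s * ∑ a, π' s a * ∑ s', T s a s' * g s' := by
  simp only [hρrec, sum_mul, mul_sum]
  rw [sum_comm]
  refine sum_congr rfl fun s _ => ?_
  rw [sum_comm]
  exact sum_congr rfl fun a _ => sum_congr rfl fun s' _ => by ring

lemma chain_nonneg (hT : ∀ s a s', 0 ≤ T s a s') (hπ' : ∀ s a, 0 ≤ π' s a)
    (hρ0 : ∀ s, 0 ≤ ρ 0 s)
    (hρrec : ∀ i s, ρ (i+1) s = ∑ s', ∑ a', T s' a' s * π' s' a' * ρ i s') :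
    ∀ i s, 0 ≤ ρ i s := by
  intro i
  induction i with
  | zero => exact hρ0
  | succ i ih =>
    intro s
    rw [hρrec]
    exact sum_nonneg fun s' _ => sum_nonneg fun a' _ =>
      mul_nonneg (mul_nonneg (hT _ _ _) (hπ' _ _)) (ih s')

lemma sum_chain_eq_one (hT1 : ∀ s a, ∑ s', T s a s' = 1) (hπ'1 : ∀ s, ∑ a, π' s a = 1)
    (hρ0 : ∑ s, ρ 0 s = 1)
    (hρrec : ∀ i s, ρ (i+1) s = ∑ s', ∑ a', T s' a' s * π' s' a' * ρ i s') :
    ∀ i, ∑ s, ρ i s = 1 := by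
  intro i
  induction i with
  | zero => exact hρ0
  | succ i ih =>
    simpa [hT1, hπ'1, ih] using sum_chain_succ_mul hρrec i fun _ => 1

lemma sum_chain_mul_le (hπ' : ∀ s a, 0 ≤ π' s a) (hρ : ∀ i s, 0 ≤ ρ i s)
    (hρrec : ∀ i s, ρ (i+1) s = ∑ s', ∑ a', T s' a' s * π' s' a' * ρ i s')
    {γ : ℝ} {x : S → A → ℝ} {g : S → ℝ} (hx : ∀ s a, x s a ≤ γ * ∑ s', T s a s' * g s')
    (i : ℕ) : ∑ s, ρ i s * ∑ a, π' s a * x s a ≤ γ * ∑ s, ρ (i+1) s * g s := by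
  rw [sum_chain_succ_mul hρrec, mul_sum]
  refine sum_le_sum fun s _ => ?_
  rw [mul_left_comm γ, mul_sum _ _ γ]
  refine mul_le_mul_of_nonneg_left (sum_le_sum fun a _ => ?_) (hρ i s)
  rw [mul_left_comm γ]
  exact mul_le_mul_of_nonneg_left (hx s a) (hπ' s a)

end StateChain

section Discounting

variable {γ : ℝ}

lemma summable_geometric_mul_of_nonneg_of_le_one (hγ0 : 0 ≤ γ) (hγ1 : γ < 1) {u : ℕ → ℝ}
    (hu0 : ∀ i, 0 ≤ u i) (hu1 : ∀ i, u i ≤ 1) : Summable fun i => γ ^ i * u i :=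
  (summable_geometric_of_lt_one hγ0 hγ1).of_nonneg_of_le
    (fun i => mul_nonneg (pow_nonneg hγ0 i) (hu0 i))
    (fun i => mul_le_of_le_one_right (pow_nonneg hγ0 i) (hu1 i))

lemma sum_tsum_geometric_mul {ι : Type*} [Fintype ι] {u : ℕ → ι → ℝ}
    (hu : ∀ s, Summable fun i => γ ^ i * u i s) (w : ι → ℝ) :
    ∑ s, (∑' i, γ ^ i * u i s) * w s = ∑' i, γ ^ i * ∑ s, u i s * w s := by
  simp_rw [← tsum_mul_right, mul_sum, ← mul_assoc]
  exact (Summable.tsum_finsetSum fun s _ => (hu s).mul_right _).symm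

lemma le_tsum_of_le_mul_succ (hγ0 : 0 ≤ γ) (hγ1 : γ < 1) {E c : ℕ → ℝ} {M : ℝ}
    (hE : ∀ n, E n ≤ M) (hc0 : 0 ≤ c 0) (hc : Summable fun i => γ ^ i * c i)
    (hstep : ∀ i, E i ≤ γ * (E (i + 1) + c (i + 1))) :
    E 0 ≤ ∑' i, γ ^ i * c i := by
  have hunroll : ∀ n, E 0 ≤ γ ^ n * M + ∑ i ∈ range n, γ ^ (i + 1) * c (i + 1) := by
    intro n
    suffices E 0 ≤ γ ^ n * E n + ∑ i ∈ range n, γ ^ (i + 1) * c (i + 1) from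
      this.trans (by gcongr; exact hE n)
    induction n with
    | zero => simp
    | succ n ih =>
      calc E 0 ≤ γ ^ n * E n + ∑ i ∈ range n, γ ^ (i + 1) * c (i + 1) := ih
        _ ≤ γ ^ n * (γ * (E (n + 1) + c (n + 1))) + ∑ i ∈ range n, γ ^ (i + 1) * c (i + 1) := by
          gcongr; exact hstep n
        _ = _ := by rw [sum_range_succ]; ring
  have hlim : Filter.Tendsto (fun n => γ ^ n * M + ∑ i ∈ range n, γ ^ (i + 1) * c (i + 1))
      Filter.atTop (nhds (0 * M + ∑' i, γ ^ (i + 1) * c (i + 1))) :=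
    ((tendsto_pow_atTop_nhds_zero_of_lt_one hγ0 hγ1).mul_const M).add
      ((summable_nat_add_iff 1).mpr hc).hasSum.tendsto_sum_nat
  rw [hc.tsum_eq_zero_add]
  have := ge_of_tendsto' hlim hunroll
  simp only [zero_mul, zero_add] at this
  simp only [pow_zero, one_mul]
  linarith

end Discounting

lemma abs_sum_mul_sub_sum_mul_le_add {A : Type*} [Fintype A] {p p' : A → ℝ}
    (hp' : ∀ a, 0 ≤ p' a) (g g' : A → ℝ) :
    |∑ a, p' a * g' a - ∑ a, p a * g a| ≤
      ∑ a, p' a * |g' a - g a| + |∑ a, p' a * g a - ∑ a, p a * g a| := by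
  have hsplit : ∑ a, p' a * g' a - ∑ a, p a * g a =
      ∑ a, p' a * (g' a - g a) + (∑ a, p' a * g a - ∑ a, p a * g a) := by
    simp only [mul_sub, sum_sub_distrib]; ring
  rw [hsplit]
  refine (abs_add_le _ _).trans (add_le_add_left ((abs_sum_le_sum_abs _ _).trans_eq ?_) _)
  exact sum_congr rfl fun a _ => by rw [abs_mul, abs_of_nonneg (hp' a)]

section Bellman

variable {S A : Type*} [Fintype S] [Fintype A] {γ : ℝ} {T : S → A → S → ℝ} {r : S → A → ℝ}
  {π π' Q Q' : S → A → ℝ}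

lemma abs_sub_le_of_bellman (hγ0 : 0 ≤ γ) (hT : ∀ s a s', 0 ≤ T s a s')
    (hQ : ∀ s a, Q s a = r s a + γ * ∑ s', T s a s' * ∑ a', π s' a' * Q s' a')
    (hQ' : ∀ s a, Q' s a = r s a + γ * ∑ s', T s a s' * ∑ a', π' s' a' * Q' s' a')
    (s : S) (a : A) :
    |Q' s a - Q s a| ≤
      γ * ∑ s', T s a s' * |∑ a', π' s' a' * Q' s' a' - ∑ a', π s' a' * Q s' a'| := by
  rw [hQ' s a, hQ s a, add_sub_add_left_eq_sub, ← mul_sub, ← sum_sub_distrib, abs_mul,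
    abs_of_nonneg hγ0]
  gcongr
  refine (abs_sum_le_sum_abs _ _).trans_eq (sum_congr rfl fun s' _ => ?_)
  rw [← mul_sub, abs_mul, abs_of_nonneg (hT s a s')]

lemma abs_sub_le_of_bellman_of_lipschitz [MetricSpace A] [Nonempty A] (hγ0 : 0 ≤ γ)
    (hT : ∀ s a s', 0 ≤ T s a s') (hπ' : ∀ s a, 0 ≤ π' s a)
    (hπ'π : ∀ s, ∑ a, π' s a = ∑ a, π s a)
    (hQ : ∀ s a, Q s a = r s a + γ * ∑ s', T s a s' * ∑ a', π s' a' * Q s' a')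
    (hQ' : ∀ s a, Q' s a = r s a + γ * ∑ s', T s a s' * ∑ a', π' s' a' * Q' s' a')
    {L : ℝ} (hL : 0 ≤ L) (hLip : ∀ s a a', |Q s a - Q s a'| ≤ L * dist a a') (s : S) (a : A) :
    |Q' s a - Q s a| ≤ γ * ∑ s', T s a s' *
      (∑ a', π' s' a' * |Q' s' a' - Q s' a'| + L * sSup (kantorovichSet (π' s') (π s'))) := by
  refine (abs_sub_le_of_bellman hγ0 hT hQ hQ' s a).trans ?_
  gcongr with s' _
  · exact hT s a s'
  · exact (abs_sum_mul_sub_sum_mul_le_add (hπ' s') _ _).trans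
      (add_le_add le_rfl (abs_sum_mul_sub_sum_mul_le (hπ'π s') hL (hLip s')))

end Bellman

theorem q_function_policy_mismatch_general {S A : Type*} [Fintype S] [Fintype A]
    [MetricSpace A] [Nonempty A]
    (γ : ℝ) (hγ0 : 0 < γ) (hγ1 : γ < 1)
    (T : S → A → S → ℝ) (hT : ∀ s a s', 0 ≤ T s a s') (hT1 : ∀ s a, ∑ s', T s a s' = 1)
    (r : S → A → ℝ)
    (π π' : S → A → ℝ) (hπ1 : ∀ s, ∑ a, π s a = 1)
    (hπ' : ∀ s a, 0 ≤ π' s a) (hπ'1 : ∀ s, ∑ a, π' s a = 1)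
    (Qπ Qπ' : S → A → ℝ)
    (hQπ : ∀ s a, Qπ s a = r s a + γ * ∑ s', T s a s' * ∑ a', π s' a' * Qπ s' a')
    (hQπ' : ∀ s a, Qπ' s a = r s a + γ * ∑ s', T s a s' * ∑ a', π' s' a' * Qπ' s' a')
    (L : ℝ) (hL : 0 ≤ L) (hLip : ∀ s a a', |Qπ s a - Qπ s a'| ≤ L * dist a a')
    (ρhat : S → ℝ) (hρhat : ∀ s, 0 ≤ ρhat s) (hρhat1 : ∑ s, ρhat s = 1)
    (ρ : ℕ → S → ℝ) (hρ0 : ∀ s, ρ 0 s = ρhat s)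
    (hρrec : ∀ i s, ρ (i+1) s = ∑ s', ∑ a', T s' a' s * π' s' a' * ρ i s')
    (W1 : S → ℝ)
    (hW1 : ∀ s, W1 s = sSup {x | ∃ f : A → ℝ, (∀ a a', |f a - f a'| ≤ dist a a') ∧
        x = |(∑ a, f a * π' s a) - ∑ a, f a * π s a|}) :
    ∑ s, ρhat s * ∑ a, π' s a * |Qπ' s a - Qπ s a| ≤
      (L / (1-γ)) * ∑ s, ((1-γ) * ∑' i : ℕ, γ^i * ρ i s) * W1 s := by
  set D : S → ℝ := fun s => ∑ a, π' s a * |Qπ' s a - Qπ s a|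
  have hρ : ∀ i s, 0 ≤ ρ i s := chain_nonneg hT hπ' (fun s => hρ0 s ▸ hρhat s) hρrec
  have hρ1 : ∀ i s, ρ i s ≤ 1 := fun i s =>
    (single_le_sum (fun s _ => hρ i s) (mem_univ s)).trans_eq
      (sum_chain_eq_one hT1 hπ'1 (by simp only [hρ0, hρhat1]) hρrec i)
  have hπ'π : ∀ s, ∑ a, π' s a = ∑ a, π s a := fun s => by rw [hπ'1, hπ1]
  have hW1nn : ∀ s, 0 ≤ W1 s := fun s => hW1 s ▸ sSup_kantorovichSet_nonneg (hπ'π s)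
  have hgap : ∀ s a, |Qπ' s a - Qπ s a| ≤ γ * ∑ s', T s a s' * (D s' + L * W1 s') :=
    fun s a => (abs_sub_le_of_bellman_of_lipschitz hγ0.le hT hπ' hπ'π hQπ hQπ' hL hLip s a).trans_eq
      (by simp only [hW1, kantorovichSet, D])
  have hsum : ∀ s, Summable fun i => γ ^ i * ρ i s := fun s =>
    summable_geometric_mul_of_nonneg_of_le_one hγ0.le hγ1 (hρ · s) (hρ1 · s)
  set E : ℕ → ℝ := fun i => ∑ s, ρ i s * D s
  set c : ℕ → ℝ := fun i => L * ∑ s, ρ i s * W1 s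
  have hstep : ∀ i, E i ≤ γ * (E (i+1) + c (i+1)) := fun i =>
    (sum_chain_mul_le hπ' hρ hρrec hgap i).trans_eq (by
      simp only [E, c, mul_add, sum_add_distrib, mul_sum _ _ L, mul_left_comm L])
  have hE : ∀ n, E n ≤ ∑ s, D s := fun n => sum_le_sum fun s _ =>
    mul_le_of_le_one_left (sum_nonneg fun a _ => mul_nonneg (hπ' s a) (abs_nonneg _)) (hρ1 n s)
  have hc0 : 0 ≤ c 0 := mul_nonneg hL (sum_nonneg fun s _ => mul_nonneg (hρ 0 s) (hW1nn s))
  have hc : Summable fun i => γ ^ i * c i :=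
    (summable_sum fun s _ => (hsum s).mul_right (L * W1 s)).congr fun i => by
      simp only [c, mul_sum]
      exact sum_congr rfl fun s _ => by ring
  calc ∑ s, ρhat s * D s = E 0 := by simp only [E, hρ0]
    _ ≤ ∑' i, γ ^ i * c i := le_tsum_of_le_mul_succ hγ0.le hγ1 hE hc0 hc hstep
    _ = _ := by
      simp_rw [mul_assoc (1 - γ), ← mul_sum, sum_tsum_geometric_mul hsum, c, mul_left_comm _ L,
        tsum_mul_left]
      field_simp [(sub_pos.mpr hγ1).ne']

/-- Difference of the true Q-functions of two policies, in expectation over an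
initial distribution and the second policy, is bounded by `L/(1-γ)` times the
expected Wasserstein distance between the policies under the occupancy measure. -/
theorem q_function_policy_mismatch {S A : Type*} [Fintype S] [Fintype A]
    [MetricSpace A] [Nonempty A]
    (γ : ℝ) (hγ0 : 0 < γ) (hγ1 : γ < 1)
    (T : S → A → S → ℝ) (hT : ∀ s a s', 0 ≤ T s a s') (hT1 : ∀ s a, ∑ s', T s a s' = 1)
    (r : S → A → ℝ)
    (π π' : S → A → ℝ) (hπ : ∀ s a, 0 ≤ π s a) (hπ1 : ∀ s, ∑ a, π s a = 1)
    (hπ' : ∀ s a, 0 ≤ π' s a) (hπ'1 : ∀ s, ∑ a, π' s a = 1)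
    (Qπ Qπ' : S → A → ℝ)
    (hQπ : ∀ s a, Qπ s a = r s a + γ * ∑ s', T s a s' * ∑ a', π s' a' * Qπ s' a')
    (hQπ' : ∀ s a, Qπ' s a = r s a + γ * ∑ s', T s a s' * ∑ a', π' s' a' * Qπ' s' a')
    (L : ℝ) (hL : 0 ≤ L) (hLip : ∀ s a a', |Qπ s a - Qπ s a'| ≤ L * dist a a')
    (ρhat : S → ℝ) (hρhat : ∀ s, 0 ≤ ρhat s) (hρhat1 : ∑ s, ρhat s = 1)
    (ρ : ℕ → S → ℝ) (hρ0 : ∀ s, ρ 0 s = ρhat s)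
    (hρrec : ∀ i s, ρ (i+1) s = ∑ s', ∑ a', T s' a' s * π' s' a' * ρ i s')
    (W1 : S → ℝ)
    (hW1 : ∀ s, W1 s = sSup {x | ∃ f : A → ℝ, (∀ a a', |f a - f a'| ≤ dist a a') ∧
        x = |(∑ a, f a * π' s a) - ∑ a, f a * π s a|}) :
    ∑ s, ρhat s * ∑ a, π' s a * |Qπ' s a - Qπ s a| ≤
      (L / (1-γ)) * ∑ s, ((1-γ) * ∑' i : ℕ, γ^i * ρ i s) * W1 s :=
  q_function_policy_mismatch_general γ hγ0 hγ1 T hT hT1 r π π' hπ1 hπ' hπ'1 Qπ Qπ' hQπ hQπ' L hL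
    hLip ρhat hρhat hρhat1 ρ hρ0 hρrec W1 hW1
end

section
/- Let Q : S × A → ℝ be arbitrary, π a policy on a finite MDP, and Q^π the true Q-function of π. Let ρ̂ be a distribution on S and ρ^{π}_{ρ̂} the occupancy measure generated by (ρ̂, π, T). Then E_{s∼ρ̂, a∼π(·|s)} |Q(s,a) − Q^π(s,a)| ≤ (1/(1−γ)) E_{(s,a) ∼ ρ^{π}_{ρ̂}(s) π(a|s)} |Q(s,a) − (B^π Q)(s,a)|, where B^π is the Bellman operator of π. -/
open Finset

/-- The evaluation error of an arbitrary Q against the true Q-function of π is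
bounded by `1/(1-γ)` times the expected Bellman error under the occupancy measure. -/
theorem q_error_bounded_by_bellman_error {S A : Type*} [Fintype S] [Fintype A]
    (γ : ℝ) (hγ0 : 0 < γ) (hγ1 : γ < 1)
    (T : S → A → S → ℝ) (hT : ∀ s a s', 0 ≤ T s a s') (hT1 : ∀ s a, ∑ s', T s a s' = 1)
    (r : S → A → ℝ)
    (π : S → A → ℝ) (hπ : ∀ s a, 0 ≤ π s a) (hπ1 : ∀ s, ∑ a, π s a = 1)
    (Q Qπ : S → A → ℝ)
    (hQπ : ∀ s a, Qπ s a = r s a + γ * ∑ s', T s a s' * ∑ a', π s' a' * Qπ s' a')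
    (ρhat : S → ℝ) (hρhat : ∀ s, 0 ≤ ρhat s) (hρhat1 : ∑ s, ρhat s = 1)
    (ρ : ℕ → S → ℝ) (hρ0 : ∀ s, ρ 0 s = ρhat s)
    (hρrec : ∀ i s, ρ (i+1) s = ∑ s', ∑ a', T s' a' s * π s' a' * ρ i s') :
    ∑ s, ρhat s * ∑ a, π s a * |Q s a - Qπ s a| ≤
      (1 / (1-γ)) * ∑ s, ((1-γ) * ∑' i : ℕ, γ^i * ρ i s) *
        ∑ a, π s a *
          |Q s a - (r s a + γ * ∑ s', T s a s' * ∑ a', π s' a' * Q s' a')| := by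
  have hγnn : (0:ℝ) ≤ γ := le_of_lt hγ0
  have h1γ : (0:ℝ) < 1 - γ := by linarith
  set e : S → ℝ := fun s => ∑ a, π s a * |Q s a - Qπ s a| with he
  set f : S → ℝ := fun s => ∑ a, π s a *
      |Q s a - (r s a + γ * ∑ s', T s a s' * ∑ a', π s' a' * Q s' a')| with hfdef
  have hennS : ∀ s, 0 ≤ e s := fun s =>
    Finset.sum_nonneg fun a _ => mul_nonneg (hπ s a) (abs_nonneg _)
  have hfnn : ∀ s, 0 ≤ f s := fun s =>
    Finset.sum_nonneg fun a _ => mul_nonneg (hπ s a) (abs_nonneg _)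
  -- ρ is nonnegative and sums to 1
  have hρnn : ∀ i s, 0 ≤ ρ i s := by
    intro i
    induction i with
    | zero => intro s; rw [hρ0]; exact hρhat s
    | succ i ih =>
      intro s; rw [hρrec]
      exact Finset.sum_nonneg fun s' _ => Finset.sum_nonneg fun a' _ =>
        mul_nonneg (mul_nonneg (hT s' a' s) (hπ s' a')) (ih s')
  have hρ1 : ∀ i, ∑ s, ρ i s = 1 := by
    intro i
    induction i with
    | zero => simp only [hρ0]; exact hρhat1
    | succ i ih =>
      simp only [hρrec]
      rw [Finset.sum_comm]
      calc ∑ s', ∑ s, ∑ a', T s' a' s * π s' a' * ρ i s'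
          = ∑ s', ∑ a', ∑ s, T s' a' s * π s' a' * ρ i s' := by
            exact Finset.sum_congr rfl fun s' _ => Finset.sum_comm
        _ = ∑ s', ρ i s' := by
            refine Finset.sum_congr rfl fun s' _ => ?_
            have : ∀ a', ∑ s, T s' a' s * π s' a' * ρ i s'
                = π s' a' * ρ i s' := by
              intro a'
              rw [← Finset.sum_mul, ← Finset.sum_mul, hT1, one_mul]
            simp only [this]
            rw [← Finset.sum_mul, hπ1, one_mul]
        _ = 1 := ih
  have hρle1 : ∀ i s, ρ i s ≤ 1 := by
    intro i s
    calc ρ i s ≤ ∑ s', ρ i s' :=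
          Finset.single_le_sum (fun s' _ => hρnn i s') (Finset.mem_univ s)
      _ = 1 := hρ1 i
  set C : ℝ := ∑ s, e s with hC
  have heC : ∀ s, e s ≤ C :=
    fun s => Finset.single_le_sum (fun s' _ => hennS s') (Finset.mem_univ s)
  have hCnn : 0 ≤ C := Finset.sum_nonneg fun s _ => hennS s
  set g : ℕ → ℝ := fun i => ∑ s, ρ i s * e s with hg
  set h : ℕ → ℝ := fun i => ∑ s, ρ i s * f s with hh
  have hgC : ∀ i, g i ≤ C := by
    intro i
    calc g i ≤ ∑ s, ρ i s * C := by
          refine Finset.sum_le_sum fun s _ => ?_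
          exact mul_le_mul_of_nonneg_left (heC s) (hρnn i s)
      _ = C := by rw [← Finset.sum_mul, hρ1, one_mul]
  have hhnn : ∀ i, 0 ≤ h i :=
    fun i => Finset.sum_nonneg fun s _ => mul_nonneg (hρnn i s) (hfnn s)
  have hCf : 0 ≤ ∑ s, f s := Finset.sum_nonneg fun s _ => hfnn s
  have hhC : ∀ i, h i ≤ ∑ s, f s := by
    intro i
    refine Finset.sum_le_sum fun s _ => ?_
    nth_rewrite 2 [show f s = 1 * f s by ring]
    exact mul_le_mul_of_nonneg_right (hρle1 i s) (hfnn s)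
  -- key one-step inequality
  have key : ∀ i, g i ≤ h i + γ * g (i+1) := by
    intro i
    have step : ∀ s, e s ≤ f s + γ * ∑ a, π s a * ∑ s', T s a s' * e s' := by
      intro s
      have hpt : ∀ a, |Q s a - Qπ s a| ≤
          |Q s a - (r s a + γ * ∑ s', T s a s' * ∑ a', π s' a' * Q s' a')|
          + γ * ∑ s', T s a s' * e s' := by
        intro a
        have expand : ∑ s', T s a s' * ∑ a', π s' a' * (Q s' a' - Qπ s' a')
            = (∑ s', T s a s' * ∑ a', π s' a' * Q s' a')
              - ∑ s', T s a s' * ∑ a', π s' a' * Qπ s' a' := by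
          rw [← Finset.sum_sub_distrib]
          refine Finset.sum_congr rfl fun s' _ => ?_
          rw [← mul_sub]
          congr 1
          rw [← Finset.sum_sub_distrib]
          exact Finset.sum_congr rfl fun a' _ => by ring
        have hdecomp : Q s a - Qπ s a =
            (Q s a - (r s a + γ * ∑ s', T s a s' * ∑ a', π s' a' * Q s' a'))
            + γ * ∑ s', T s a s' * ∑ a', π s' a' * (Q s' a' - Qπ s' a') := by
          rw [expand, hQπ s a]; ring
        calc |Q s a - Qπ s a|
            ≤ |Q s a - (r s a + γ * ∑ s', T s a s' * ∑ a', π s' a' * Q s' a')|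
              + |γ * ∑ s', T s a s' * ∑ a', π s' a' * (Q s' a' - Qπ s' a')| := by
              rw [hdecomp]; exact abs_add_le _ _
          _ ≤ _ := by
              gcongr
              rw [abs_mul, abs_of_nonneg hγnn]
              refine mul_le_mul_of_nonneg_left ?_ hγnn
              calc |∑ s', T s a s' * ∑ a', π s' a' * (Q s' a' - Qπ s' a')|
                  ≤ ∑ s', |T s a s' * ∑ a', π s' a' * (Q s' a' - Qπ s' a')| :=
                    Finset.abs_sum_le_sum_abs _ _
                _ ≤ ∑ s', T s a s' * e s' := by
                    refine Finset.sum_le_sum fun s' _ => ?_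
                    rw [abs_mul, abs_of_nonneg (hT s a s')]
                    refine mul_le_mul_of_nonneg_left ?_ (hT s a s')
                    calc |∑ a', π s' a' * (Q s' a' - Qπ s' a')|
                        ≤ ∑ a', |π s' a' * (Q s' a' - Qπ s' a')| :=
                          Finset.abs_sum_le_sum_abs _ _
                      _ = e s' := by
                          refine Finset.sum_congr rfl fun a' _ => ?_
                          rw [abs_mul, abs_of_nonneg (hπ s' a')]
      calc e s = ∑ a, π s a * |Q s a - Qπ s a| := rfl
        _ ≤ ∑ a, π s a * (|Q s a - (r s a + γ * ∑ s', T s a s' * ∑ a', π s' a' * Q s' a')|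
              + γ * ∑ s', T s a s' * e s') := by
            exact Finset.sum_le_sum fun a _ => mul_le_mul_of_nonneg_left (hpt a) (hπ s a)
        _ = f s + γ * ∑ a, π s a * ∑ s', T s a s' * e s' := by
            simp only [mul_add, Finset.sum_add_distrib]
            congr 1
            rw [Finset.mul_sum]
            exact Finset.sum_congr rfl fun a _ => by ring
    have swap : ∑ s, ρ i s * ∑ a, π s a * ∑ s', T s a s' * e s'
        = ∑ s', ρ (i+1) s' * e s' := by
      have lhs : ∑ s, ρ i s * ∑ a, π s a * ∑ s', T s a s' * e s'
          = ∑ s, ∑ a, ∑ s', T s a s' * π s a * ρ i s * e s' := by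
        refine Finset.sum_congr rfl fun s _ => ?_
        rw [Finset.mul_sum]
        refine Finset.sum_congr rfl fun a _ => ?_
        rw [Finset.mul_sum, Finset.mul_sum]
        exact Finset.sum_congr rfl fun s' _ => by ring
      rw [lhs]
      have mid : ∀ s : S, ∑ a, ∑ s', T s a s' * π s a * ρ i s * e s'
          = ∑ s', ∑ a, T s a s' * π s a * ρ i s * e s' :=
        fun s => Finset.sum_comm
      simp only [mid]
      rw [Finset.sum_comm]
      refine Finset.sum_congr rfl fun s' _ => ?_
      rw [hρrec i s', Finset.sum_mul]
      refine Finset.sum_congr rfl fun s _ => ?_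
      rw [Finset.sum_mul]
    calc g i = ∑ s, ρ i s * e s := rfl
      _ ≤ ∑ s, ρ i s * (f s + γ * ∑ a, π s a * ∑ s', T s a s' * e s') := by
          exact Finset.sum_le_sum fun s _ => mul_le_mul_of_nonneg_left (step s) (hρnn i s)
      _ = h i + γ * ∑ s, ρ i s * ∑ a, π s a * ∑ s', T s a s' * e s' := by
          simp only [mul_add, Finset.sum_add_distrib]
          congr 1
          rw [Finset.mul_sum]
          exact Finset.sum_congr rfl fun s _ => by ring
      _ = h i + γ * g (i+1) := by rw [swap]
  -- unrolled inequality
  have ind : ∀ n, g 0 ≤ (∑ i ∈ Finset.range n, γ^i * h i) + γ^n * g n := by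
    intro n
    induction n with
    | zero => simp
    | succ n ih =>
      calc g 0 ≤ (∑ i ∈ Finset.range n, γ^i * h i) + γ^n * g n := ih
        _ ≤ (∑ i ∈ Finset.range n, γ^i * h i) + γ^n * (h n + γ * g (n+1)) := by
            have := key n
            have hp := pow_nonneg hγnn n
            nlinarith
        _ = (∑ i ∈ Finset.range (n+1), γ^i * h i) + γ^(n+1) * g (n+1) := by
            rw [Finset.sum_range_succ]; ring
  have hsummable : Summable (fun i => γ^i * h i) := by
    refine Summable.of_nonneg_of_le (fun i => mul_nonneg (pow_nonneg hγnn i) (hhnn i))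
      (fun i => mul_le_mul_of_nonneg_left (hhC i) (pow_nonneg hγnn i)) ?_
    exact (summable_geometric_of_lt_one hγnn hγ1).mul_right _
  have hbound : ∀ n, g 0 ≤ (∑ i ∈ Finset.range n, γ^i * h i) + γ^n * C := by
    intro n
    refine (ind n).trans ?_
    have := hgC n
    have hp := pow_nonneg hγnn n
    nlinarith
  have hlim : Filter.Tendsto (fun n => (∑ i ∈ Finset.range n, γ^i * h i) + γ^n * C)
      Filter.atTop (nhds ((∑' i, γ^i * h i) + 0)) := by
    refine Filter.Tendsto.add hsummable.hasSum.tendsto_sum_nat ?_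
    simpa using (tendsto_pow_atTop_nhds_zero_of_lt_one hγnn hγ1).mul_const C
  have hg0 : g 0 ≤ ∑' i, γ^i * h i := by
    have := ge_of_tendsto' hlim hbound
    simpa using this
  -- summability of occupancy series
  have hsummρ : ∀ s, Summable (fun i => γ^i * ρ i s) := by
    intro s
    refine Summable.of_nonneg_of_le (fun i => mul_nonneg (pow_nonneg hγnn i) (hρnn i s))
      (fun i => mul_le_of_le_one_right (pow_nonneg hγnn i) (hρle1 i s)) ?_
    exact summable_geometric_of_lt_one hγnn hγ1
  -- identify RHS with the tsum
  have hRHS : (1 / (1-γ)) * ∑ s, ((1-γ) * ∑' i : ℕ, γ^i * ρ i s) * f s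
      = ∑' i, γ^i * h i := by
    have h1 : ∀ s : S, ((1-γ) * ∑' i : ℕ, γ^i * ρ i s) * f s
        = (1-γ) * ((∑' i : ℕ, γ^i * ρ i s) * f s) := fun s => by ring
    simp only [h1]
    rw [← Finset.mul_sum, one_div, inv_mul_cancel_left₀ (ne_of_gt h1γ)]
    have h2 : ∀ s : S, (∑' i : ℕ, γ^i * ρ i s) * f s = ∑' i : ℕ, γ^i * ρ i s * f s :=
      fun s => (tsum_mul_right).symm
    simp only [h2]
    rw [← Summable.tsum_finsetSum (fun s _ => (hsummρ s).mul_right (f s))]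
    refine tsum_congr fun i => ?_
    rw [hh]
    rw [Finset.mul_sum]
    exact Finset.sum_congr rfl fun s _ => by ring
  have hL : ∑ s, ρhat s * e s = g 0 := by
    refine Finset.sum_congr rfl fun s _ => ?_
    rw [hρ0]
  calc ∑ s, ρhat s * e s = g 0 := hL
    _ ≤ ∑' i, γ^i * h i := hg0
    _ = (1 / (1-γ)) * ∑ s, ((1-γ) * ∑' i : ℕ, γ^i * ρ i s) * f s := hRHS.symm
end

section
/- Let Q : S × A → ℝ be L-Lipschitz in a for each s, let π, π' be two policies on a finite MDP, and let ρ^{π'}_{ρ̂} be the occupancy measure of (ρ̂, π', T). Then E_{(s,a)∼ρ^{π'}_{ρ̂}(s)π'(a|s)} |Q(s,a) − (B^{π'}Q)(s,a)| ≤ E_{(s,a)∼ρ^{π'}_{ρ̂}(s)π'(a|s)} [ |Q(s,a) − (B^π Q)(s,a)| + L · W₁(π(·|s), π'(·|s)) ]. -/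
/-!
Write `B^π` for the Bellman operator and `d` for the discounted occupancy of `π'`. Pointwise,
`|Q - B^{π'} Q| ≤ |Q - B^π Q| + |B^π Q - B^{π'} Q|`, and the last term is `γ` times the
`T(·|s,a)`-average of the gaps `|E_π Q(s',·) - E_{π'} Q(s',·)| ≤ L · W₁(π(·|s'), π'(·|s'))`
(rescale `Q(s',·)` by `L` to make it a test function of the dual formula for `W₁`). Averaging over
`d ⊗ π'` pushes this error one step forward along the chain, and the flow equation
`d = (1 - γ) ρ̂ + γ d P^{π'}` shows that `γ d P^{π'} ≤ d`, which removes that step.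
-/

open Finset

theorem abs_sum_mul_sub_sum_mul_le_s10 {A : Type*} [Fintype A] {μ ν : A → ℝ}
    (h : ∑ a, μ a = ∑ a, ν a) (g : A → ℝ) (c : ℝ) :
    |∑ a, μ a * g a - ∑ a, ν a * g a| ≤ ∑ a, |μ a - ν a| * |g a - c| := by
  have hshift : ∑ a, μ a * g a - ∑ a, ν a * g a = ∑ a, (μ a - ν a) * (g a - c) := by
    simp only [sub_mul, mul_sub, sum_sub_distrib, ← sum_mul, h]
    ring
  rw [hshift]
  exact (abs_sum_le_sum_abs _ _).trans_eq (by simp only [abs_mul])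

section Wasserstein

variable {A : Type*} [Fintype A] [MetricSpace A]

def lipschitzGaps (μ ν : A → ℝ) : Set ℝ :=
  {x | ∃ f : A → ℝ, (∀ a a', |f a - f a'| ≤ dist a a') ∧
    x = |(∑ a, f a * μ a) - ∑ a, f a * ν a|}

noncomputable def wassersteinDual (μ ν : A → ℝ) : ℝ := sSup (lipschitzGaps μ ν)

theorem bddAbove_lipschitzGaps {μ ν : A → ℝ} (hμ : ∑ a, μ a = 1) (hν : ∑ a, ν a = 1) :
    BddAbove (lipschitzGaps μ ν) := by
  obtain ⟨a₀, -, -⟩ := exists_ne_zero_of_sum_ne_zero (hμ ▸ one_ne_zero)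
  refine ⟨∑ a, |μ a - ν a| * dist a a₀, ?_⟩
  rintro x ⟨f, hf, rfl⟩
  simp_rw [mul_comm (f _)]
  refine (abs_sum_mul_sub_sum_mul_le_s10 (hμ.trans hν.symm) f (f a₀)).trans ?_
  gcongr with a
  exact hf a a₀

theorem abs_sum_mul_sub_le_mul_wassersteinDual {μ ν g : A → ℝ} {L : ℝ}
    (hμ : ∑ a, μ a = 1) (hν : ∑ a, ν a = 1) (hL : 0 ≤ L)
    (hg : ∀ a a', |g a - g a'| ≤ L * dist a a') :
    |∑ a, μ a * g a - ∑ a, ν a * g a| ≤ L * wassersteinDual μ ν := by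
  rcases hL.eq_or_lt with rfl | hL
  · obtain ⟨a₀, -, -⟩ := exists_ne_zero_of_sum_ne_zero (hμ ▸ one_ne_zero)
    have hconst : ∀ a, g a = g a₀ := fun a =>
      sub_eq_zero.mp (abs_nonpos_iff.mp ((hg a a₀).trans_eq (zero_mul _)))
    simpa [hconst] using abs_sum_mul_sub_sum_mul_le_s10 (hμ.trans hν.symm) g (g a₀)
  · have hmem : |∑ a, μ a * g a - ∑ a, ν a * g a| / L ∈ lipschitzGaps μ ν := by
      refine ⟨fun a => g a / L, fun a a' => ?_, ?_⟩
      · rw [← sub_div, abs_div, abs_of_pos hL, div_le_iff₀' hL]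
        exact hg a a'
      · rw [← abs_of_pos hL, ← abs_div, abs_of_pos hL, sub_div, sum_div, sum_div]
        simp only [mul_div_assoc, mul_comm (μ _), mul_comm (ν _), div_mul_eq_mul_div]
    have := le_csSup (bddAbove_lipschitzGaps hμ hν) hmem
    rwa [div_le_iff₀' hL] at this

end Wasserstein

noncomputable def discountedOccupancy {S : Type*} (γ : ℝ) (ρ : ℕ → S → ℝ) (s : S) : ℝ :=
  (1 - γ) * ∑' i, γ ^ i * ρ i s

theorem discountedOccupancy_nonneg {S : Type*} {ρ : ℕ → S → ℝ} {γ : ℝ} (hγ0 : 0 ≤ γ)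
    (hγ1 : γ ≤ 1) (hρ : ∀ i s, 0 ≤ ρ i s) (s : S) : 0 ≤ discountedOccupancy γ ρ s :=
  mul_nonneg (sub_nonneg.mpr hγ1) (tsum_nonneg fun i => mul_nonneg (pow_nonneg hγ0 i) (hρ i s))

section Occupancy

variable {S : Type*} [Fintype S] {K : S → S → ℝ} {ρ : ℕ → S → ℝ} {γ : ℝ}

variable (K ρ) in
def IsMarkovLaws : Prop := ∀ i s', ρ (i + 1) s' = ∑ s, K s s' * ρ i s

namespace IsMarkovLaws

theorem nonneg (h : IsMarkovLaws K ρ) (hK : ∀ s s', 0 ≤ K s s') (h0 : ∀ s, 0 ≤ ρ 0 s)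
    (i : ℕ) (s : S) : 0 ≤ ρ i s := by
  induction i generalizing s with
  | zero => exact h0 s
  | succ i ih => rw [h]; exact sum_nonneg fun s _ => mul_nonneg (hK _ _) (ih s)

theorem sum_eq (h : IsMarkovLaws K ρ) (hK1 : ∀ s, ∑ s', K s s' = 1) (i : ℕ) :
    ∑ s, ρ i s = ∑ s, ρ 0 s := by
  induction i with
  | zero => rfl
  | succ i ih => simp only [h i, sum_comm (γ := S), ← sum_mul, hK1, one_mul, ih]

variable (h : IsMarkovLaws K ρ) (hK : ∀ s s', 0 ≤ K s s') (hK1 : ∀ s, ∑ s', K s s' = 1)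
  (h0 : ∀ s, 0 ≤ ρ 0 s) (hγ0 : 0 ≤ γ) (hγ1 : γ < 1)
include h hK hK1 h0 hγ0 hγ1

theorem summable_geometric_mul (s : S) : Summable fun i => γ ^ i * ρ i s := by
  have hnn := h.nonneg hK h0
  refine ((summable_geometric_of_lt_one hγ0 hγ1).mul_right (∑ s, ρ 0 s)).of_nonneg_of_le
    (fun i => mul_nonneg (pow_nonneg hγ0 i) (hnn i s)) fun i => ?_
  rw [← h.sum_eq hK1 i]
  exact mul_le_mul_of_nonneg_left (single_le_sum (fun s _ => hnn i s) (mem_univ s))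
    (pow_nonneg hγ0 i)

theorem discountedOccupancy_eq (s' : S) :
    discountedOccupancy γ ρ s' =
      (1 - γ) * ρ 0 s' + γ * ∑ s, K s s' * discountedOccupancy γ ρ s := by
  have hsum := h.summable_geometric_mul hK hK1 h0 hγ0 hγ1
  have hshift : ∑' i, γ ^ (i + 1) * ρ (i + 1) s' = γ * ∑ s, K s s' * ∑' i, γ ^ i * ρ i s :=
    calc ∑' i, γ ^ (i + 1) * ρ (i + 1) s' = ∑' i, ∑ s, γ * K s s' * (γ ^ i * ρ i s) :=
          tsum_congr fun i => by
            simp only [h i, mul_sum, pow_succ]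
            exact sum_congr rfl fun s _ => by ring
      _ = ∑ s, γ * K s s' * ∑' i, γ ^ i * ρ i s := by
          rw [Summable.tsum_finsetSum fun s _ => (hsum s).mul_left _]
          simp only [tsum_mul_left]
      _ = γ * ∑ s, K s s' * ∑' i, γ ^ i * ρ i s := by simp only [mul_sum, mul_assoc]
  rw [discountedOccupancy, (hsum s').tsum_eq_zero_add, hshift, pow_zero, one_mul, mul_add]
  simp only [discountedOccupancy, mul_sum]
  congr 1
  exact sum_congr rfl fun s _ => by ring

theorem mul_sum_mul_discountedOccupancy_le (s' : S) :
    γ * ∑ s, K s s' * discountedOccupancy γ ρ s ≤ discountedOccupancy γ ρ s' := by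
  rw [h.discountedOccupancy_eq hK hK1 h0 hγ0 hγ1 s']
  exact le_add_of_nonneg_left (mul_nonneg (sub_nonneg.mpr hγ1.le) (h0 s'))

theorem sum_discountedOccupancy_mul_sum_le {c : S → ℝ} (hc : ∀ s, 0 ≤ c s) :
    ∑ s, discountedOccupancy γ ρ s * (γ * ∑ s', K s s' * c s') ≤
      ∑ s, discountedOccupancy γ ρ s * c s :=
  calc ∑ s, discountedOccupancy γ ρ s * (γ * ∑ s', K s s' * c s')
      = ∑ s', c s' * (γ * ∑ s, K s s' * discountedOccupancy γ ρ s) := by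
        simp only [mul_sum]
        rw [sum_comm]
        exact sum_congr rfl fun s' _ => sum_congr rfl fun s _ => by ring
    _ ≤ ∑ s', c s' * discountedOccupancy γ ρ s' := by
        gcongr with s' _
        · exact hc s'
        · exact h.mul_sum_mul_discountedOccupancy_le hK hK1 h0 hγ0 hγ1 s'
    _ = ∑ s, discountedOccupancy γ ρ s * c s := sum_congr rfl fun s _ => mul_comm _ _

end IsMarkovLaws

end Occupancy

section MDP

variable {S A : Type*} [Fintype A]

def inducedKernel (T : S → A → S → ℝ) (π : S → A → ℝ) (s s' : S) : ℝ :=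
  ∑ a, T s a s' * π s a

def bellman [Fintype S] (γ : ℝ) (T : S → A → S → ℝ) (r π Q : S → A → ℝ) (s : S) (a : A) : ℝ :=
  r s a + γ * ∑ s', T s a s' * ∑ a', π s' a' * Q s' a'

theorem inducedKernel_nonneg {T : S → A → S → ℝ} {π : S → A → ℝ}
    (hT : ∀ s a s', 0 ≤ T s a s') (hπ : ∀ s a, 0 ≤ π s a) (s s' : S) :
    0 ≤ inducedKernel T π s s' :=
  sum_nonneg fun a _ => mul_nonneg (hT s a s') (hπ s a)

variable [Fintype S]

theorem sum_inducedKernel {T : S → A → S → ℝ} {π : S → A → ℝ}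
    (hT1 : ∀ s a, ∑ s', T s a s' = 1) (hπ1 : ∀ s, ∑ a, π s a = 1) (s : S) :
    ∑ s', inducedKernel T π s s' = 1 := by
  simp only [inducedKernel, sum_comm (γ := S), ← sum_mul, hT1, one_mul, hπ1]

theorem abs_bellman_sub_bellman_le {γ : ℝ} {T : S → A → S → ℝ} {r π π' Q : S → A → ℝ}
    {c : S → ℝ} (hγ : 0 ≤ γ) (hT : ∀ s a s', 0 ≤ T s a s')
    (hc : ∀ s, |∑ a, π s a * Q s a - ∑ a, π' s a * Q s a| ≤ c s) (s : S) (a : A) :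
    |bellman γ T r π Q s a - bellman γ T r π' Q s a| ≤ γ * ∑ s', T s a s' * c s' := by
  have hdiff : bellman γ T r π Q s a - bellman γ T r π' Q s a =
      γ * ∑ s', T s a s' * (∑ a', π s' a' * Q s' a' - ∑ a', π' s' a' * Q s' a') := by
    simp only [bellman, mul_sub, sum_sub_distrib]
    ring
  rw [hdiff, abs_mul, abs_of_nonneg hγ]
  gcongr
  refine (abs_sum_le_sum_abs _ _).trans (sum_le_sum fun s' _ => ?_)
  rw [abs_mul, abs_of_nonneg (hT s a s')]
  exact mul_le_mul_of_nonneg_left (hc s') (hT s a s')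

theorem sum_discountedOccupancy_policy_mul_add_le {γ : ℝ} {T : S → A → S → ℝ}
    {π : S → A → ℝ} {ρ : ℕ → S → ℝ} (hγ0 : 0 ≤ γ) (hγ1 : γ < 1)
    (hT : ∀ s a s', 0 ≤ T s a s') (hT1 : ∀ s a, ∑ s', T s a s' = 1)
    (hπ : ∀ s a, 0 ≤ π s a) (hπ1 : ∀ s, ∑ a, π s a = 1) (h0 : ∀ s, 0 ≤ ρ 0 s)
    (hρ : IsMarkovLaws (inducedKernel T π) ρ) (X : S → A → ℝ) {c : S → ℝ} (hc : ∀ s, 0 ≤ c s) :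
    ∑ s, discountedOccupancy γ ρ s * ∑ a, π s a * (X s a + γ * ∑ s', T s a s' * c s') ≤
      ∑ s, discountedOccupancy γ ρ s * ∑ a, π s a * (X s a + c s) := by
  have hnext : ∀ s, ∑ a, π s a * (X s a + γ * ∑ s', T s a s' * c s') =
      ∑ a, π s a * X s a + γ * ∑ s', inducedKernel T π s s' * c s' := fun s => by
    simp only [inducedKernel, mul_add, sum_add_distrib, mul_sum, sum_mul]
    rw [sum_comm (γ := S)]
    congr 1
    exact sum_congr rfl fun s' _ => sum_congr rfl fun a _ => by ring
  have hnow : ∀ s, ∑ a, π s a * (X s a + c s) = ∑ a, π s a * X s a + c s := fun s => by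
    simp only [mul_add, sum_add_distrib, ← sum_mul, hπ1, one_mul]
  simp only [hnext, hnow]
  simp only [mul_add, sum_add_distrib]
  exact add_le_add_right (hρ.sum_discountedOccupancy_mul_sum_le (inducedKernel_nonneg hT hπ)
    (sum_inducedKernel hT1 hπ1) h0 hγ0 hγ1 hc) _

end MDP

theorem bellman_error_policy_change_general {S A : Type*} [Fintype S] [Fintype A]
    [MetricSpace A]
    (γ : ℝ) (hγ0 : 0 < γ) (hγ1 : γ < 1)
    (T : S → A → S → ℝ) (hT : ∀ s a s', 0 ≤ T s a s') (hT1 : ∀ s a, ∑ s', T s a s' = 1)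
    (r : S → A → ℝ)
    (π π' : S → A → ℝ) (hπ1 : ∀ s, ∑ a, π s a = 1)
    (hπ' : ∀ s a, 0 ≤ π' s a) (hπ'1 : ∀ s, ∑ a, π' s a = 1)
    (Q : S → A → ℝ)
    (L : ℝ) (hL : 0 ≤ L) (hLip : ∀ s a a', |Q s a - Q s a'| ≤ L * dist a a')
    (ρhat : S → ℝ) (hρhat : ∀ s, 0 ≤ ρhat s)
    (ρ : ℕ → S → ℝ) (hρ0 : ∀ s, ρ 0 s = ρhat s)
    (hρrec : ∀ i s, ρ (i+1) s = ∑ s', ∑ a', T s' a' s * π' s' a' * ρ i s')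
    (W1 : S → ℝ)
    (hW1 : ∀ s, W1 s = sSup {x | ∃ f : A → ℝ, (∀ a a', |f a - f a'| ≤ dist a a') ∧
        x = |(∑ a, f a * π s a) - ∑ a, f a * π' s a|}) :
    ∑ s, ((1-γ) * ∑' i : ℕ, γ^i * ρ i s) * ∑ a, π' s a *
        |Q s a - (r s a + γ * ∑ s', T s a s' * ∑ a', π' s' a' * Q s' a')| ≤
      ∑ s, ((1-γ) * ∑' i : ℕ, γ^i * ρ i s) * ∑ a, π' s a *
        (|Q s a - (r s a + γ * ∑ s', T s a s' * ∑ a', π s' a' * Q s' a')| +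
          L * W1 s) := by
  have h0 : ∀ s, 0 ≤ ρ 0 s := fun s => by rw [hρ0]; exact hρhat s
  have hρ : IsMarkovLaws (inducedKernel T π') ρ := fun i s => by
    simp only [hρrec, inducedKernel, sum_mul]
  have hgap : ∀ s, |∑ a, π s a * Q s a - ∑ a, π' s a * Q s a| ≤ L * W1 s := fun s => by
    rw [hW1 s]
    exact abs_sum_mul_sub_le_mul_wassersteinDual (hπ1 s) (hπ'1 s) hL (hLip s)
  have hbellman : ∀ s a, |Q s a - bellman γ T r π' Q s a| ≤
      |Q s a - bellman γ T r π Q s a| + γ * ∑ s', T s a s' * (L * W1 s') := fun s a =>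
    (abs_sub_le _ _ _).trans (add_le_add_right (abs_bellman_sub_bellman_le hγ0.le hT hgap s a) _)
  have hd : ∀ s, 0 ≤ discountedOccupancy γ ρ s := discountedOccupancy_nonneg hγ0.le hγ1.le
    (hρ.nonneg (inducedKernel_nonneg hT hπ') h0)
  change ∑ s, discountedOccupancy γ ρ s * ∑ a, π' s a * |Q s a - bellman γ T r π' Q s a| ≤
    ∑ s, discountedOccupancy γ ρ s * ∑ a, π' s a * (|Q s a - bellman γ T r π Q s a| + L * W1 s)
  calc _ ≤ ∑ s, discountedOccupancy γ ρ s * ∑ a, π' s a *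
        (|Q s a - bellman γ T r π Q s a| + γ * ∑ s', T s a s' * (L * W1 s')) := by
        gcongr with s _ a _
        exacts [hd s, hπ' s a, hbellman s a]
    _ ≤ _ := sum_discountedOccupancy_policy_mul_add_le hγ0.le hγ1 hT hT1 hπ' hπ'1 h0 hρ _
        fun s => (abs_nonneg _).trans (hgap s)

/-- Changing the policy in the Bellman operator costs at most `L · W₁` on a
Lipschitz Q, in expectation under the occupancy measure of π'. -/
theorem bellman_error_policy_change {S A : Type*} [Fintype S] [Fintype A]
    [MetricSpace A] [Nonempty A]
    (γ : ℝ) (hγ0 : 0 < γ) (hγ1 : γ < 1)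
    (T : S → A → S → ℝ) (hT : ∀ s a s', 0 ≤ T s a s') (hT1 : ∀ s a, ∑ s', T s a s' = 1)
    (r : S → A → ℝ)
    (π π' : S → A → ℝ) (hπ : ∀ s a, 0 ≤ π s a) (hπ1 : ∀ s, ∑ a, π s a = 1)
    (hπ' : ∀ s a, 0 ≤ π' s a) (hπ'1 : ∀ s, ∑ a, π' s a = 1)
    (Q : S → A → ℝ)
    (L : ℝ) (hL : 0 ≤ L) (hLip : ∀ s a a', |Q s a - Q s a'| ≤ L * dist a a')
    (ρhat : S → ℝ) (hρhat : ∀ s, 0 ≤ ρhat s) (hρhat1 : ∑ s, ρhat s = 1)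
    (ρ : ℕ → S → ℝ) (hρ0 : ∀ s, ρ 0 s = ρhat s)
    (hρrec : ∀ i s, ρ (i+1) s = ∑ s', ∑ a', T s' a' s * π' s' a' * ρ i s')
    (W1 : S → ℝ)
    (hW1 : ∀ s, W1 s = sSup {x | ∃ f : A → ℝ, (∀ a a', |f a - f a'| ≤ dist a a') ∧
        x = |(∑ a, f a * π s a) - ∑ a, f a * π' s a|}) :
    ∑ s, ((1-γ) * ∑' i : ℕ, γ^i * ρ i s) * ∑ a, π' s a *
        |Q s a - (r s a + γ * ∑ s', T s a s' * ∑ a', π' s' a' * Q s' a')| ≤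
      ∑ s, ((1-γ) * ∑' i : ℕ, γ^i * ρ i s) * ∑ a, π' s a *
        (|Q s a - (r s a + γ * ∑ s', T s a s' * ∑ a', π s' a' * Q s' a')| +
          L * W1 s) :=
  bellman_error_policy_change_general γ hγ0 hγ1 T hT hT1 r π π' hπ1 hπ' hπ'1 Q L hL hLip ρhat hρhat
    ρ hρ0 hρrec W1 hW1
end

section
/- Combining the previous two lemmas: if Q(s,·) is L-Lipschitz for each s and π' is any policy, then E_{s∼ρ̂, a∼π'(·|s)} |Q(s,a) − Q^{π'}(s,a)| ≤ (1/(1−γ)) E_{(s,a)∼ρ^{π'}_{ρ̂}(s)π'(a|s)} [ |Q(s,a) − (B^π Q)(s,a)| + L · W₁(π(·|s), π'(·|s)) ] for any reference policy π. -/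
open Finset Filter Topology Matrix

/-! Write `e = Q - Q^{π'}`. As `Q^{π'}` is the fixed point of `B^{π'}`,
`e = (Q - B^π Q) + γ T (π Q - π' Q^{π'})` and `π Q - π' Q^{π'} = (π - π') Q + π' e`, where
`|(π - π') Q| ≤ L W₁(π, π')` by Kantorovich–Rubinstein duality. Averaging over `π'`, the function
`X = L W₁ + π' |e|` satisfies `X ≤ g + γ P X` with `g = π' |Q - B^π Q| + L W₁` and `P` the state
chain of `π'`. Pairing with `ρ_i` and using `ρ_{i+1} = ρ_i P` gives
`ρ_i X ≤ ρ_i g + γ ρ_{i+1} X`, which telescopes to `ρ̂ X ≤ ∑ᵢ γ^i ρ_i g` because the `ρ_i` have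
bounded mass. -/

theorem le_tsum_geometric_of_le_add_mul_succ {x y : ℕ → ℝ} {γ C : ℝ} (hγ0 : 0 ≤ γ)
    (hγ1 : γ < 1) (hxC : ∀ n, x n ≤ C) (hy : Summable fun i => γ ^ i * y i)
    (hstep : ∀ n, x n ≤ y n + γ * x (n + 1)) : x 0 ≤ ∑' i, γ ^ i * y i := by
  have hpartial : ∀ n, x 0 ≤ ∑ i ∈ range n, γ ^ i * y i + γ ^ n * x n := by
    intro n
    induction n with
    | zero => simp
    | succ n ih =>
      calc x 0 ≤ ∑ i ∈ range n, γ ^ i * y i + γ ^ n * x n := ih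
        _ ≤ ∑ i ∈ range n, γ ^ i * y i + γ ^ n * (y n + γ * x (n + 1)) :=
          add_le_add_right (mul_le_mul_of_nonneg_left (hstep n) (pow_nonneg hγ0 n)) _
        _ = ∑ i ∈ range (n + 1), γ ^ i * y i + γ ^ (n + 1) * x (n + 1) := by
          rw [sum_range_succ]; ring
  have hlim : Tendsto (fun n => ∑ i ∈ range n, γ ^ i * y i + γ ^ n * C) atTop
      (𝓝 (∑' i, γ ^ i * y i + 0 * C)) :=
    hy.hasSum.tendsto_sum_nat.add ((tendsto_pow_atTop_nhds_zero_of_lt_one hγ0 hγ1).mul_const C)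
  simpa using ge_of_tendsto' hlim fun n =>
    (hpartial n).trans (add_le_add_right (mul_le_mul_of_nonneg_left (hxC n) (pow_nonneg hγ0 n)) _)

section Occupancy

variable {S : Type*} [Fintype S] {P : Matrix S S ℝ} {ρ : ℕ → S → ℝ}

theorem nonneg_of_vecMul_succ (hP : ∀ s s', 0 ≤ P s s') (h0 : ∀ s, 0 ≤ ρ 0 s)
    (hρ : ∀ i, ρ (i + 1) = ρ i ᵥ* P) (i : ℕ) (s : S) : 0 ≤ ρ i s := by
  induction i generalizing s with
  | zero => exact h0 s
  | succ i ih => rw [hρ]; exact sum_nonneg fun s' _ => mul_nonneg (ih s') (hP s' s)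

theorem sum_eq_sum_zero_of_vecMul_succ (hP1 : ∀ s, ∑ s', P s s' = 1)
    (hρ : ∀ i, ρ (i + 1) = ρ i ᵥ* P) (i : ℕ) : ∑ s, ρ i s = ∑ s, ρ 0 s := by
  have hP_one : P *ᵥ 1 = 1 := funext fun s => by simp [mulVec, dotProduct, hP1]
  induction i with
  | zero => rfl
  | succ i ih => rw [← ih, ← dotProduct_one, ← dotProduct_one, hρ, ← dotProduct_mulVec, hP_one]

theorem dotProduct_le_tsum_of_le_add_mulVec (hP : ∀ s s', 0 ≤ P s s')
    (hP1 : ∀ s, ∑ s', P s s' = 1) (h0 : ∀ s, 0 ≤ ρ 0 s) (hρ : ∀ i, ρ (i + 1) = ρ i ᵥ* P)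
    {γ : ℝ} (hγ0 : 0 ≤ γ) (hγ1 : γ < 1) {X g : S → ℝ} (hX : X ≤ g + γ • P *ᵥ X) :
    ρ 0 ⬝ᵥ X ≤ ∑ s, (∑' i, γ ^ i * ρ i s) * g s := by
  have hnonneg := nonneg_of_vecMul_succ hP h0 hρ
  have hle (i : ℕ) (s : S) : ρ i s ≤ ∑ s, ρ 0 s :=
    sum_eq_sum_zero_of_vecMul_succ hP1 hρ i ▸
      single_le_sum (fun s _ => hnonneg i s) (mem_univ s)
  have hsummable (s : S) : Summable fun i => γ ^ i * ρ i s :=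
    ((summable_geometric_of_lt_one hγ0 hγ1).mul_right (∑ s, ρ 0 s)).of_nonneg_of_le
      (fun i => mul_nonneg (pow_nonneg hγ0 i) (hnonneg i s))
      (fun i => mul_le_mul_of_nonneg_left (hle i s) (pow_nonneg hγ0 i))
  have hexpand (i : ℕ) : γ ^ i * (ρ i ⬝ᵥ g) = ∑ s, γ ^ i * ρ i s * g s := by
    simp only [dotProduct, mul_sum, mul_assoc]
  have htelescope : ρ 0 ⬝ᵥ X ≤ ∑' i, γ ^ i * (ρ i ⬝ᵥ g) := by
    refine le_tsum_geometric_of_le_add_mul_succ (x := fun i => ρ i ⬝ᵥ X)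
      (C := ∑ s, (∑ s, ρ 0 s) * |X s|) hγ0 hγ1 (fun i => ?_) ?_ (fun i => ?_)
    · exact sum_le_sum fun s _ => (mul_le_mul_of_nonneg_left (le_abs_self _) (hnonneg i s)).trans
        (mul_le_mul_of_nonneg_right (hle i s) (abs_nonneg _))
    · simpa only [hexpand] using summable_sum fun s _ => (hsummable s).mul_right (g s)
    · calc ρ i ⬝ᵥ X ≤ ρ i ⬝ᵥ (g + γ • P *ᵥ X) :=
            dotProduct_le_dotProduct_of_nonneg_left hX (hnonneg i)
        _ = ρ i ⬝ᵥ g + γ * (ρ (i + 1) ⬝ᵥ X) := by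
            rw [dotProduct_add, dotProduct_smul, dotProduct_mulVec, hρ, smul_eq_mul]
  calc ρ 0 ⬝ᵥ X ≤ ∑' i, γ ^ i * (ρ i ⬝ᵥ g) := htelescope
    _ = ∑ s, (∑' i, γ ^ i * ρ i s) * g s := by
      simp only [hexpand, ← tsum_mul_right]
      exact Summable.tsum_finsetSum fun s _ => (hsummable s).mul_right (g s)

end Occupancy

section KantorovichDual

variable {A : Type*} [Fintype A] {p q : A → ℝ}

theorem dotProduct_sub_dotProduct_eq_sum_sum (hp1 : ∑ a, p a = 1) (hq1 : ∑ a, q a = 1)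
    (f : A → ℝ) : f ⬝ᵥ p - f ⬝ᵥ q = ∑ a, ∑ b, (f a - f b) * (p a * q b) := by
  have hleft : ∑ a, ∑ b, f a * (p a * q b) = f ⬝ᵥ p := by
    simp only [← mul_sum, hq1, mul_one, dotProduct]
  have hright : ∑ a, ∑ b, f b * (p a * q b) = f ⬝ᵥ q := by
    rw [sum_comm]
    simp only [mul_left_comm _ (p _), ← sum_mul, hp1, one_mul, dotProduct]
  simp only [sub_mul, sum_sub_distrib, hleft, hright]

variable [PseudoMetricSpace A]

/-- Its supremum is `W₁(p, q)`, by Kantorovich–Rubinstein duality. -/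
def kantorovichDualSet (p q : A → ℝ) : Set ℝ :=
  {x | ∃ f : A → ℝ, (∀ a a', |f a - f a'| ≤ dist a a') ∧ x = |f ⬝ᵥ p - f ⬝ᵥ q|}

/-- The transport cost of the product coupling `p ⊗ q`; it bounds `kantorovichDualSet p q`, so that
its `sSup` is a genuine supremum rather than the junk value `0`. -/
theorem abs_dotProduct_sub_le_of_lipschitz (hp : ∀ a, 0 ≤ p a) (hp1 : ∑ a, p a = 1)
    (hq : ∀ a, 0 ≤ q a) (hq1 : ∑ a, q a = 1) {L : ℝ} {f : A → ℝ}
    (hf : ∀ a b, |f a - f b| ≤ L * dist a b) :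
    |f ⬝ᵥ p - f ⬝ᵥ q| ≤ L * ∑ a, ∑ b, dist a b * (p a * q b) := by
  rw [dotProduct_sub_dotProduct_eq_sum_sum hp1 hq1]
  refine (abs_sum_le_sum_abs _ _).trans ?_
  simp only [mul_sum]
  refine sum_le_sum fun a _ => (abs_sum_le_sum_abs _ _).trans (sum_le_sum fun b _ => ?_)
  rw [abs_mul, abs_of_nonneg (mul_nonneg (hp a) (hq b)), ← mul_assoc L]
  exact mul_le_mul_of_nonneg_right (hf a b) (mul_nonneg (hp a) (hq b))

theorem bddAbove_kantorovichDualSet (hp : ∀ a, 0 ≤ p a) (hp1 : ∑ a, p a = 1)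
    (hq : ∀ a, 0 ≤ q a) (hq1 : ∑ a, q a = 1) : BddAbove (kantorovichDualSet p q) := by
  refine ⟨∑ a, ∑ b, dist a b * (p a * q b), ?_⟩
  rintro _ ⟨f, hf, rfl⟩
  simpa using abs_dotProduct_sub_le_of_lipschitz hp hp1 hq hq1 (L := 1) (by simpa using hf)

theorem sSup_kantorovichDualSet_nonneg (hp : ∀ a, 0 ≤ p a) (hp1 : ∑ a, p a = 1)
    (hq : ∀ a, 0 ≤ q a) (hq1 : ∑ a, q a = 1) : 0 ≤ sSup (kantorovichDualSet p q) :=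
  le_csSup (bddAbove_kantorovichDualSet hp hp1 hq hq1) ⟨0, by simp, by simp⟩

theorem abs_dotProduct_sub_le_mul_sSup (hp : ∀ a, 0 ≤ p a) (hp1 : ∑ a, p a = 1)
    (hq : ∀ a, 0 ≤ q a) (hq1 : ∑ a, q a = 1) {L : ℝ} (hL : 0 ≤ L) {f : A → ℝ}
    (hf : ∀ a b, |f a - f b| ≤ L * dist a b) :
    |f ⬝ᵥ p - f ⬝ᵥ q| ≤ L * sSup (kantorovichDualSet p q) := by
  rcases hL.eq_or_lt with rfl | hL
  · simpa using abs_dotProduct_sub_le_of_lipschitz hp hp1 hq hq1 hf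
  have hscaled : ∀ a b, |L⁻¹ • f a - L⁻¹ • f b| ≤ dist a b := fun a b => by
    rw [← smul_sub, abs_smul, abs_of_pos (inv_pos.2 hL), smul_eq_mul, inv_mul_le_iff₀ hL]
    exact hf a b
  have hmem : L⁻¹ * |f ⬝ᵥ p - f ⬝ᵥ q| ≤ sSup (kantorovichDualSet p q) := by
    refine le_csSup (bddAbove_kantorovichDualSet hp hp1 hq hq1) ⟨L⁻¹ • f, hscaled, ?_⟩
    rw [smul_dotProduct, smul_dotProduct, ← smul_sub, abs_smul, abs_of_pos (inv_pos.2 hL),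
      smul_eq_mul]
  rwa [inv_mul_le_iff₀ hL] at hmem

end KantorovichDual

theorem abs_dotProduct_sub_dotProduct_le {A : Type*} [Fintype A] {p' : A → ℝ}
    (hp' : ∀ a, 0 ≤ p' a) (p v w : A → ℝ) :
    |p ⬝ᵥ v - p' ⬝ᵥ w| ≤ |p ⬝ᵥ v - p' ⬝ᵥ v| + p' ⬝ᵥ fun a => |v a - w a| := by
  have hdiff : |p' ⬝ᵥ v - p' ⬝ᵥ w| ≤ p' ⬝ᵥ fun a => |v a - w a| := by
    rw [← dotProduct_sub]
    refine (abs_sum_le_sum_abs _ _).trans (le_of_eq (sum_congr rfl fun a _ => ?_))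
    rw [abs_mul, abs_of_nonneg (hp' a), Pi.sub_apply]
  exact (abs_sub_le _ _ _).trans (add_le_add_right hdiff _)

section MDP

variable {S A : Type*} [Fintype A] {T : S → A → S → ℝ} {π π' : S → A → ℝ}

def stateKernel (T : S → A → S → ℝ) (π : S → A → ℝ) : Matrix S S ℝ :=
  fun s s' => ∑ a, π s a * T s a s'

theorem stateKernel_nonneg (hT : ∀ s a s', 0 ≤ T s a s') (hπ : ∀ s a, 0 ≤ π s a) (s s' : S) :
    0 ≤ stateKernel T π s s' :=
  sum_nonneg fun a _ => mul_nonneg (hπ s a) (hT s a s')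

variable [Fintype S]

def bellmanOp (r : S → A → ℝ) (γ : ℝ) (T : S → A → S → ℝ) (π Q : S → A → ℝ) : S → A → ℝ :=
  fun s a => r s a + γ * ∑ s', T s a s' * (π s' ⬝ᵥ Q s')

theorem sum_stateKernel (hT1 : ∀ s a, ∑ s', T s a s' = 1) (hπ1 : ∀ s, ∑ a, π s a = 1) (s : S) :
    ∑ s', stateKernel T π s s' = 1 := by
  simp only [stateKernel]
  rw [sum_comm]
  simp only [← mul_sum, hT1, mul_one, hπ1]

theorem vecMul_stateKernel_apply (ρ : S → ℝ) (s : S) :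
    (ρ ᵥ* stateKernel T π) s = ∑ s', ∑ a, T s' a s * π s' a * ρ s' := by
  simp only [vecMul, dotProduct, stateKernel, mul_sum]
  exact sum_congr rfl fun s' _ => sum_congr rfl fun a _ => by ring

theorem stateKernel_mulVec_apply (V : S → ℝ) (s : S) :
    (stateKernel T π *ᵥ V) s = ∑ a, π s a * ∑ s', T s a s' * V s' := by
  simp only [mulVec, dotProduct, stateKernel, sum_mul, mul_sum, mul_assoc]
  exact sum_comm

theorem abs_bellmanOp_sub_bellmanOp_le {γ : ℝ} (hγ : 0 ≤ γ) (hT : ∀ s a s', 0 ≤ T s a s')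
    (r : S → A → ℝ) (Q Q' : S → A → ℝ) (s : S) (a : A) :
    |bellmanOp r γ T π Q s a - bellmanOp r γ T π' Q' s a| ≤
      γ * ∑ s', T s a s' * |π s' ⬝ᵥ Q s' - π' s' ⬝ᵥ Q' s'| := by
  have hdiff : bellmanOp r γ T π Q s a - bellmanOp r γ T π' Q' s a =
      γ * ∑ s', T s a s' * (π s' ⬝ᵥ Q s' - π' s' ⬝ᵥ Q' s') := by
    simp only [bellmanOp, mul_sub, sum_sub_distrib]
    ring
  rw [hdiff, abs_mul, abs_of_nonneg hγ]
  refine mul_le_mul_of_nonneg_left ((abs_sum_le_sum_abs _ _).trans (le_of_eq ?_)) hγ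
  simp only [abs_mul, abs_of_nonneg (hT s a _)]

theorem dotProduct_abs_sub_le_of_eq_bellmanOp {γ : ℝ} (hγ : 0 ≤ γ) (hT : ∀ s a s', 0 ≤ T s a s')
    (hπ' : ∀ s a, 0 ≤ π' s a) {r Q Qπ' : S → A → ℝ}
    (hQπ' : ∀ s a, Qπ' s a = bellmanOp r γ T π' Qπ' s a) {m : S → ℝ}
    (hm : ∀ s, |π s ⬝ᵥ Q s - π' s ⬝ᵥ Q s| ≤ m s) (s : S) :
    (π' s ⬝ᵥ fun a => |Q s a - Qπ' s a|) ≤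
      (π' s ⬝ᵥ fun a => |Q s a - bellmanOp r γ T π Q s a|) +
        γ * (stateKernel T π' *ᵥ fun s' => m s' + π' s' ⬝ᵥ fun a => |Q s' a - Qπ' s' a|) s := by
  have hpointwise (a : A) : |Q s a - Qπ' s a| ≤ |Q s a - bellmanOp r γ T π Q s a| +
      γ * ∑ s', T s a s' * (m s' + π' s' ⬝ᵥ fun a => |Q s' a - Qπ' s' a|) := by
    rw [hQπ' s a]
    refine (abs_sub_le _ (bellmanOp r γ T π Q s a) _).trans (add_le_add_right ?_ _)
    refine (abs_bellmanOp_sub_bellmanOp_le hγ hT r Q Qπ' s a).trans ?_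
    refine mul_le_mul_of_nonneg_left (sum_le_sum fun s' _ => ?_) hγ
    refine mul_le_mul_of_nonneg_left ?_ (hT s a s')
    exact (abs_dotProduct_sub_dotProduct_le (hπ' s') _ _ _).trans (add_le_add_left (hm s') _)
  calc (π' s ⬝ᵥ fun a => |Q s a - Qπ' s a|)
      ≤ π' s ⬝ᵥ fun a => |Q s a - bellmanOp r γ T π Q s a| +
          γ * ∑ s', T s a s' * (m s' + π' s' ⬝ᵥ fun a => |Q s' a - Qπ' s' a|) :=
        dotProduct_le_dotProduct_of_nonneg_left hpointwise (hπ' s)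
    _ = _ := by
      rw [stateKernel_mulVec_apply]
      simp only [dotProduct, mul_add, sum_add_distrib, mul_left_comm _ γ, ← mul_sum]

end MDP

theorem q_error_bellman_plus_mismatch_general {S A : Type*} [Fintype S] [Fintype A]
    [MetricSpace A]
    (γ : ℝ) (hγ0 : 0 < γ) (hγ1 : γ < 1)
    (T : S → A → S → ℝ) (hT : ∀ s a s', 0 ≤ T s a s') (hT1 : ∀ s a, ∑ s', T s a s' = 1)
    (r : S → A → ℝ)
    (π π' : S → A → ℝ) (hπ : ∀ s a, 0 ≤ π s a) (hπ1 : ∀ s, ∑ a, π s a = 1)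
    (hπ' : ∀ s a, 0 ≤ π' s a) (hπ'1 : ∀ s, ∑ a, π' s a = 1)
    (Q Qπ' : S → A → ℝ)
    (hQπ' : ∀ s a, Qπ' s a = r s a + γ * ∑ s', T s a s' * ∑ a', π' s' a' * Qπ' s' a')
    (L : ℝ) (hL : 0 ≤ L) (hLip : ∀ s a a', |Q s a - Q s a'| ≤ L * dist a a')
    (ρhat : S → ℝ) (hρhat : ∀ s, 0 ≤ ρhat s)
    (ρ : ℕ → S → ℝ) (hρ0 : ∀ s, ρ 0 s = ρhat s)
    (hρrec : ∀ i s, ρ (i+1) s = ∑ s', ∑ a', T s' a' s * π' s' a' * ρ i s')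
    (W1 : S → ℝ)
    (hW1 : ∀ s, W1 s = sSup {x | ∃ f : A → ℝ, (∀ a a', |f a - f a'| ≤ dist a a') ∧
        x = |(∑ a, f a * π s a) - ∑ a, f a * π' s a|}) :
    ∑ s, ρhat s * ∑ a, π' s a * |Q s a - Qπ' s a| ≤
      (1 / (1-γ)) * ∑ s, ((1-γ) * ∑' i : ℕ, γ^i * ρ i s) * ∑ a, π' s a *
        (|Q s a - (r s a + γ * ∑ s', T s a s' * ∑ a', π s' a' * Q s' a')| +
          L * W1 s) := by
  set u : S → ℝ := fun s => π' s ⬝ᵥ fun a => |Q s a - Qπ' s a|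
  set ε : S → ℝ := fun s => π' s ⬝ᵥ fun a => |Q s a - bellmanOp r γ T π Q s a|
  set m : S → ℝ := fun s => L * W1 s
  have hW1_nonneg (s : S) : 0 ≤ W1 s :=
    hW1 s ▸ sSup_kantorovichDualSet_nonneg (hπ s) (hπ1 s) (hπ' s) (hπ'1 s)
  have hm (s : S) : |π s ⬝ᵥ Q s - π' s ⬝ᵥ Q s| ≤ m s := by
    rw [dotProduct_comm (π s), dotProduct_comm (π' s), show m s = L * W1 s from rfl, hW1 s]
    exact abs_dotProduct_sub_le_mul_sSup (hπ s) (hπ1 s) (hπ' s) (hπ'1 s) hL (hLip s)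
  have hρP (i : ℕ) : ρ (i + 1) = ρ i ᵥ* stateKernel T π' :=
    funext fun s => (hρrec i s).trans (vecMul_stateKernel_apply (ρ i) s).symm
  have hρ0_nonneg (s : S) : 0 ≤ ρ 0 s := hρ0 s ▸ hρhat s
  have hstep : m + u ≤ (ε + m) + γ • stateKernel T π' *ᵥ (m + u) := fun s => by
    have : u s ≤ ε s + γ * (stateKernel T π' *ᵥ (m + u)) s :=
      dotProduct_abs_sub_le_of_eq_bellmanOp hγ0.le hT hπ' hQπ' hm s
    simp only [Pi.add_apply, Pi.smul_apply, smul_eq_mul]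
    linarith
  have hocc := dotProduct_le_tsum_of_le_add_mulVec (stateKernel_nonneg hT hπ')
    (sum_stateKernel hT1 hπ'1) hρ0_nonneg hρP hγ0.le hγ1 hstep
  calc ∑ s, ρhat s * ∑ a, π' s a * |Q s a - Qπ' s a| = ρ 0 ⬝ᵥ u := by
        simp only [dotProduct, hρ0, u]
    _ ≤ ρ 0 ⬝ᵥ (m + u) := dotProduct_le_dotProduct_of_nonneg_left
        (fun s => le_add_of_nonneg_left (mul_nonneg hL (hW1_nonneg s))) hρ0_nonneg
    _ ≤ ∑ s, (∑' i, γ ^ i * ρ i s) * (ε + m) s := hocc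
    _ = _ := by
      have hinner (s : S) : ∑ a, π' s a *
          (|Q s a - (r s a + γ * ∑ s', T s a s' * ∑ a', π s' a' * Q s' a')| + L * W1 s) =
          (ε + m) s := by
        simp only [mul_add, sum_add_distrib, ← sum_mul, hπ'1, one_mul]
        rfl
      have hγ1' : 1 - γ ≠ 0 := (sub_pos.2 hγ1).ne'
      rw [mul_sum]
      exact sum_congr rfl fun s _ => by rw [hinner s]; field_simp

/-- Combined bound: evaluation error of a Lipschitz Q against the true Q-function
of π' is bounded by `1/(1-γ)` times the expected Bellman error w.r.t. any
reference policy π plus `L` times the expected Wasserstein distance. -/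
theorem q_error_bellman_plus_mismatch {S A : Type*} [Fintype S] [Fintype A]
    [MetricSpace A] [Nonempty A]
    (γ : ℝ) (hγ0 : 0 < γ) (hγ1 : γ < 1)
    (T : S → A → S → ℝ) (hT : ∀ s a s', 0 ≤ T s a s') (hT1 : ∀ s a, ∑ s', T s a s' = 1)
    (r : S → A → ℝ)
    (π π' : S → A → ℝ) (hπ : ∀ s a, 0 ≤ π s a) (hπ1 : ∀ s, ∑ a, π s a = 1)
    (hπ' : ∀ s a, 0 ≤ π' s a) (hπ'1 : ∀ s, ∑ a, π' s a = 1)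
    (Q Qπ' : S → A → ℝ)
    (hQπ' : ∀ s a, Qπ' s a = r s a + γ * ∑ s', T s a s' * ∑ a', π' s' a' * Qπ' s' a')
    (L : ℝ) (hL : 0 ≤ L) (hLip : ∀ s a a', |Q s a - Q s a'| ≤ L * dist a a')
    (ρhat : S → ℝ) (hρhat : ∀ s, 0 ≤ ρhat s) (hρhat1 : ∑ s, ρhat s = 1)
    (ρ : ℕ → S → ℝ) (hρ0 : ∀ s, ρ 0 s = ρhat s)
    (hρrec : ∀ i s, ρ (i+1) s = ∑ s', ∑ a', T s' a' s * π' s' a' * ρ i s')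
    (W1 : S → ℝ)
    (hW1 : ∀ s, W1 s = sSup {x | ∃ f : A → ℝ, (∀ a a', |f a - f a'| ≤ dist a a') ∧
        x = |(∑ a, f a * π s a) - ∑ a, f a * π' s a|}) :
    ∑ s, ρhat s * ∑ a, π' s a * |Q s a - Qπ' s a| ≤
      (1 / (1-γ)) * ∑ s, ((1-γ) * ∑' i : ℕ, γ^i * ρ i s) * ∑ a, π' s a *
        (|Q s a - (r s a + γ * ∑ s', T s a s' * ∑ a', π s' a' * Q s' a')| +
          L * W1 s) :=
  q_error_bellman_plus_mismatch_general γ hγ0 hγ1 T hT hT1 r π π' hπ hπ1 hπ' hπ'1 Q Qπ' hQπ' L hL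
    hLip ρhat hρhat ρ hρ0 hρrec W1 hW1
end
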